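/- arXiv:1805.03445 — 5 statements merged into one kernel-verified Lean document; each statement's English description precedes it below -/
import Mathlib

section
/- Let M be the differential operator M(y) = (x²−1)y'' + (x − 2p(x²−1))y' + (p²(x²−1) − px − n²)y over the field K = ℚ(n,p). For every s ≥ 0, M(x^s) is a polynomial in x of degree exactly s+2 with leading coefficient p². Consequently, every polynomial of degree ≤ 2 in x lying in M(K[x]) is a K-scalar multiple of M(1) = p²x² − px − n² − p². -/
open Polynomial

/-- The field `K = ℚ(n, p)` of rational functions in two indeterminates. -/
noncomputable abbrev Knp : Type := RatFunc (RatFunc ℚ)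

/-- The indeterminate `n`. -/
noncomputable def nn : Knp := RatFunc.C RatFunc.X

/-- The indeterminate `p`. -/
noncomputable def pp : Knp := RatFunc.X

/-- The operator `M(y) = (x²−1)y'' + (x − 2p(x²−1))y' + (p²(x²−1) − px − n²)y`
acting on `K[x]`. -/
noncomputable def Mnp (y : Knp[X]) : Knp[X] :=
  (X ^ 2 - 1) * derivative (derivative y) +
    (X - C (2 * pp) * (X ^ 2 - 1)) * derivative y +
    (C (pp ^ 2) * (X ^ 2 - 1) - C pp * X - C (nn ^ 2)) * y

/-!
In `M(y) = a y'' + b y' + c y` the coefficient `c` of `y` has degree `2` and leading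
coefficient `p²`, while `a` and `b` have degree at most `2`. Since differentiation strictly
lowers degrees, the term `c y` alone determines the top coefficient: `M` raises the degree of
every nonzero `y` by exactly `2` and multiplies its leading coefficient by `p²`. Hence a
preimage of a polynomial of degree `≤ 2` is a constant `c`, and `M(c) = c · M(1)`.
-/

namespace Polynomial

variable {R : Type*} [Semiring R]

noncomputable def secondOrderOp (a b c y : R[X]) : R[X] :=
  a * derivative (derivative y) + b * derivative y + c * y

variable [NoZeroDivisors R] {a b c y : R[X]}

theorem degree_derivative_terms_lt_degree_mul (ha : a.degree ≤ c.degree)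
    (hb : b.degree ≤ c.degree) (hc : c ≠ 0) (hy : y ≠ 0) :
    (a * derivative (derivative y) + b * derivative y).degree < (c * y).degree := by
  have hc' : c.degree ≠ ⊥ := degree_ne_bot.mpr hc
  have hy' : (derivative y).degree < y.degree := degree_derivative_lt hy
  have hy'' : (derivative (derivative y)).degree < y.degree := degree_derivative_le.trans_lt hy'
  rw [degree_mul]
  refine (degree_add_le _ _).trans_lt (max_lt ?_ ?_)
  · calc (a * derivative (derivative y)).degree
        ≤ c.degree + (derivative (derivative y)).degree := by
          rw [degree_mul]; exact add_le_add_left ha _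
      _ < c.degree + y.degree := WithBot.add_lt_add_left hc' hy''
  · calc (b * derivative y).degree ≤ c.degree + (derivative y).degree := by
          rw [degree_mul]; exact add_le_add_left hb _
      _ < c.degree + y.degree := WithBot.add_lt_add_left hc' hy'

theorem degree_secondOrderOp (ha : a.degree ≤ c.degree) (hb : b.degree ≤ c.degree)
    (hc : c ≠ 0) (hy : y ≠ 0) :
    (secondOrderOp a b c y).degree = c.degree + y.degree := by
  rw [secondOrderOp,
    degree_add_eq_right_of_degree_lt (degree_derivative_terms_lt_degree_mul ha hb hc hy),
    degree_mul]

theorem leadingCoeff_secondOrderOp (ha : a.degree ≤ c.degree) (hb : b.degree ≤ c.degree)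
    (hc : c ≠ 0) (hy : y ≠ 0) :
    (secondOrderOp a b c y).leadingCoeff = c.leadingCoeff * y.leadingCoeff := by
  rw [secondOrderOp,
    leadingCoeff_add_of_degree_lt (degree_derivative_terms_lt_degree_mul ha hb hc hy),
    leadingCoeff_mul]

theorem degree_le_zero_of_degree_secondOrderOp_le (ha : a.degree ≤ c.degree)
    (hb : b.degree ≤ c.degree) (hc : c ≠ 0) (h : (secondOrderOp a b c y).degree ≤ c.degree) :
    y.degree ≤ 0 := by
  rcases eq_or_ne y 0 with rfl | hy
  · simp
  rw [degree_secondOrderOp ha hb hc hy, degree_eq_natDegree hc, degree_eq_natDegree hy] at h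
  rw [degree_eq_natDegree hy]
  norm_cast at h ⊢
  omega

end Polynomial

theorem pp_ne_zero : pp ≠ 0 := RatFunc.X_ne_zero

noncomputable def MnpPotential : Knp[X] := C (pp ^ 2) * (X ^ 2 - 1) - C pp * X - C (nn ^ 2)

theorem Mnp_eq_secondOrderOp (y : Knp[X]) :
    Mnp y = secondOrderOp (X ^ 2 - 1) (X - C (2 * pp) * (X ^ 2 - 1)) MnpPotential y := rfl

theorem degree_MnpPotential : MnpPotential.degree = 2 := by
  unfold MnpPotential
  compute_degree!
  exact pp_ne_zero

theorem natDegree_MnpPotential : MnpPotential.natDegree = 2 :=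
  natDegree_eq_of_degree_eq_some degree_MnpPotential

theorem leadingCoeff_MnpPotential : MnpPotential.leadingCoeff = pp ^ 2 := by
  rw [leadingCoeff, natDegree_MnpPotential, MnpPotential]
  simp only [mul_sub, mul_one, coeff_sub, coeff_C_mul, coeff_X_pow, coeff_C, coeff_X]
  norm_num

theorem MnpPotential_ne_zero : MnpPotential ≠ 0 :=
  ne_zero_of_degree_gt (n := 0) (by rw [degree_MnpPotential]; decide)

theorem degree_X_sq_sub_one_le_degree_MnpPotential :
    ((X : Knp[X]) ^ 2 - 1).degree ≤ MnpPotential.degree := by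
  rw [degree_MnpPotential]; compute_degree!

theorem degree_X_sub_C_mul_le_degree_MnpPotential :
    ((X : Knp[X]) - C (2 * pp) * (X ^ 2 - 1)).degree ≤ MnpPotential.degree := by
  rw [degree_MnpPotential]; compute_degree!

theorem degree_Mnp {y : Knp[X]} (hy : y ≠ 0) : (Mnp y).degree = 2 + y.degree := by
  rw [Mnp_eq_secondOrderOp, ← degree_MnpPotential]
  exact degree_secondOrderOp degree_X_sq_sub_one_le_degree_MnpPotential
    degree_X_sub_C_mul_le_degree_MnpPotential MnpPotential_ne_zero hy

theorem leadingCoeff_Mnp {y : Knp[X]} (hy : y ≠ 0) :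
    (Mnp y).leadingCoeff = pp ^ 2 * y.leadingCoeff := by
  rw [Mnp_eq_secondOrderOp, ← leadingCoeff_MnpPotential]
  exact leadingCoeff_secondOrderOp degree_X_sq_sub_one_le_degree_MnpPotential
    degree_X_sub_C_mul_le_degree_MnpPotential MnpPotential_ne_zero hy

theorem degree_le_zero_of_degree_Mnp_le_two {y : Knp[X]} (h : (Mnp y).degree ≤ 2) :
    y.degree ≤ 0 := by
  rw [Mnp_eq_secondOrderOp, ← degree_MnpPotential] at h
  exact degree_le_zero_of_degree_secondOrderOp_le degree_X_sq_sub_one_le_degree_MnpPotential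
    degree_X_sub_C_mul_le_degree_MnpPotential MnpPotential_ne_zero h

theorem Mnp_C (c : Knp) :
    Mnp (C c) = c • (C (pp ^ 2) * X ^ 2 - C pp * X - C (nn ^ 2 + pp ^ 2)) := by
  simp only [Mnp, derivative_C, derivative_zero, smul_eq_C_mul, C_add, mul_zero, zero_add]
  ring

/-- for every `s ≥ 0`, `M(x^s)` has degree exactly `s + 2` with leading
coefficient `p²`; consequently every polynomial of degree ≤ 2 lying in `M(K[x])` is a
`K`-scalar multiple of `M(1) = p²x² − px − n² − p²`. -/
theorem Mnp_degree_and_image :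
    (∀ s : ℕ, (Mnp (X ^ s)).degree = (s + 2 : ℕ) ∧ (Mnp (X ^ s)).leadingCoeff = pp ^ 2) ∧
    (∀ q : Knp[X], q.degree ≤ 2 → (∃ y : Knp[X], Mnp y = q) →
      ∃ c : Knp, q = c • (C (pp ^ 2) * X ^ 2 - C pp * X - C (nn ^ 2 + pp ^ 2))) := by
  refine ⟨fun s => ?_, ?_⟩
  · have hXs : (X ^ s : Knp[X]) ≠ 0 := pow_ne_zero _ X_ne_zero
    rw [degree_Mnp hXs, leadingCoeff_Mnp hXs, degree_X_pow, leadingCoeff_X_pow, mul_one]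
    exact ⟨by push_cast; rw [add_comm], rfl⟩
  · rintro q hq ⟨y, rfl⟩
    have hy := degree_le_zero_of_degree_Mnp_le_two hq
    exact ⟨y.coeff 0, by rw [eq_C_of_degree_le_zero hy, Mnp_C, coeff_C_zero]⟩
end

section
/- With the weak Hermite reduction H associated to a linear differential operator M with polynomial coefficients over a field K of characteristic zero, H is idempotent: H(H(R)) = H(R) for all R ∈ K(x). -/
/-!
Each local reduction `H_α`, and `H_∞`, walks down a filtration (pole order at `α`, resp. degree):
at each level the leading term is either cancelled, by subtracting `M` applied to a power of
`x - α` (resp. of `x`), or kept, and which of the two happens depends only on the leading term.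
Induction on the level shows that such a reduction is idempotent, changes its argument only by
functions regular away from `α` (resp. at all finite points), and commutes with adding functions
of the bottom level. Hence `H(R)`, which differs by a function regular at `γ` from `H_γ(R_{(γ)})`
(or from `0`), is fixed by every `H_γ`; so is each principal part of `H(R)`, and
`H(H(R)) = H_∞(H(R)) = H(R)`.
-/

open Polynomial

/-- The derivative of a rational function, `(p/q)' = (p'q − pq')/q²`. -/
noncomputable def ratDeriv {K : Type*} [Field K] (f : RatFunc K) : RatFunc K :=
  (algebraMap K[X] (RatFunc K) (derivative f.num) * algebraMap K[X] (RatFunc K) f.denom -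
      algebraMap K[X] (RatFunc K) f.num * algebraMap K[X] (RatFunc K) (derivative f.denom)) /
    algebraMap K[X] (RatFunc K) (f.denom ^ 2)

/-- The action of the differential operator `M = ∑_{i=0}^r pᵢ ∂ⁱ` (with polynomial
coefficients `pᵢ`) on a rational function. -/
noncomputable def applyOp {K : Type*} [Field K] (r : ℕ) (p : ℕ → K[X]) (f : RatFunc K) :
    RatFunc K :=
  ∑ i ∈ Finset.range (r + 1), algebraMap K[X] (RatFunc K) (p i) * ratDeriv^[i] f

/-- `f` has no pole at `α`. -/
def regAt {K : Type*} [Field K] (α : K) (f : RatFunc K) : Prop :=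
  Polynomial.eval α f.denom ≠ 0

/-- `ord_α f ≥ m` : the valuation of `f` at `α` (as a Laurent series in `x − α`)
is at least `m`. -/
def ordGe {K : Type*} [Field K] (α : K) (m : ℤ) (f : RatFunc K) : Prop :=
  regAt α ((RatFunc.X - RatFunc.C α) ^ (-m) * f)

/-- `f` has degree (order at infinity, negated) at most `m`, i.e. `ord_∞ f ≥ −m`. -/
def degLe {K : Type*} [Field K] (m : ℤ) (f : RatFunc K) : Prop :=
  f = 0 ∨ RatFunc.intDegree f ≤ m

section FilteredReduction

variable {V : Type*} [AddCommGroup V]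

/-- `e` is a leading part at level `n + 1` that `H` either eliminates, by passing from `T` to
`T - v` with `v ∈ G` and `e - v ∈ F n`, or keeps, by splitting it off. -/
def ReducesLeadingTerm (H : V → V) (F : ℕ → AddSubgroup V) (G : AddSubgroup V) (n : ℕ)
    (e : V) : Prop :=
  (∃ v ∈ G, e - v ∈ F n ∧ ∀ T, T - e ∈ F n → H T = H (T - v)) ∨
    ∀ T, T - e ∈ F n → H T = e + H (T - e)

variable {H : V → V} {F : ℕ → AddSubgroup V} {G : AddSubgroup V}

lemma reducesLeadingTerm_zero (n : ℕ) : ReducesLeadingTerm H F G n 0 :=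
  Or.inl ⟨0, zero_mem G, by simp, fun T _ => by rw [sub_zero]⟩

theorem filteredReduction_spec_of_mem (hF : Monotone F) (h0 : ∀ R ∈ F 0, H R = R)
    (hstep : ∀ n, ∀ R ∈ F (n + 1), ∃ e, R - e ∈ F n ∧ ReducesLeadingTerm H F G n e)
    (n : ℕ) : ∀ R ∈ F n,
      H R ∈ F n ∧ H (H R) = H R ∧ H R - R ∈ G ∧ ∀ u ∈ F 0, H (R + u) = H R + u := by
  induction n with
  | zero =>
    intro R hR
    rw [h0 R hR, h0 R hR, sub_self]
    exact ⟨hR, rfl, zero_mem G, fun u hu => h0 _ (add_mem hR hu)⟩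
  | succ n ih =>
    intro R hR
    have hFn : F n ≤ F (n + 1) := hF n.le_succ
    obtain ⟨e, hRe, hcase⟩ := hstep n R hR
    have hRu : ∀ u ∈ F 0, R + u - e ∈ F n := fun u hu => by
      rw [add_sub_right_comm]; exact add_mem hRe (hF (Nat.zero_le n) hu)
    rcases hcase with hreduce | hkeep
    · obtain ⟨v, hvG, hev, hHv⟩ := hreduce
      have hRv : R - v ∈ F n := by simpa using add_mem hRe hev
      obtain ⟨hmem, hidem, hG, hequiv⟩ := ih _ hRv
      rw [hHv R hRe]
      refine ⟨hFn hmem, hidem, by convert sub_mem hG hvG using 1; abel, fun u hu => ?_⟩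
      rw [hHv _ (hRu u hu), add_sub_right_comm, hequiv u hu]
    · obtain ⟨hmem, hidem, hG, hequiv⟩ := ih _ hRe
      have hHR := hkeep R hRe
      have he : e ∈ F (n + 1) := by simpa using sub_mem hR (hFn hRe)
      refine ⟨?_, ?_, ?_, fun u hu => ?_⟩
      · rw [hHR]; exact add_mem he (hFn hmem)
      · rw [hkeep (H R) (by rwa [hHR, add_sub_cancel_left]), hHR, add_sub_cancel_left, hidem]
      · rw [hHR]; convert hG using 1; abel
      · rw [hkeep _ (hRu u hu), hHR, add_sub_right_comm, hequiv u hu, add_assoc]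

theorem filteredReduction_spec (hF : Monotone F) (h0 : ∀ R ∈ F 0, H R = R)
    (hstep : ∀ n, ∀ R ∈ F (n + 1), ∃ e, R - e ∈ F n ∧ ReducesLeadingTerm H F G n e)
    (hexh : ∀ R, ∃ n, R ∈ F n) (R : V) :
    H (H R) = H R ∧ H R - R ∈ G ∧ ∀ u ∈ F 0, H (R + u) = H R + u :=
  let ⟨n, hn⟩ := hexh R
  (filteredReduction_spec_of_mem hF h0 hstep n R hn).2

end FilteredReduction

namespace WeakHermite

variable {K : Type*} [Field K]

local notation "ψ" => algebraMap K[X] (RatFunc K)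

lemma X_sub_C_eq_algebraMap (α : K) : RatFunc.X - RatFunc.C α = ψ (X - C α) := by
  simp [RatFunc.algebraMap_X, RatFunc.algebraMap_C]

lemma X_sub_C_ne_zero (α : K) : RatFunc.X - RatFunc.C α ≠ 0 := by
  rw [X_sub_C_eq_algebraMap]; exact RatFunc.algebraMap_ne_zero (Polynomial.X_sub_C_ne_zero α)

lemma X_sub_C_zpow_natCast (α : K) (k : ℕ) :
    (RatFunc.X - RatFunc.C α) ^ (k : ℤ) = ψ ((X - C α) ^ k) := by
  rw [zpow_natCast, map_pow, X_sub_C_eq_algebraMap]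

lemma smul_eq_algebraMap_C_mul (c : K) (f : RatFunc K) : c • f = ψ (C c) * f := by
  rw [Algebra.smul_def, IsScalarTower.algebraMap_apply K K[X] (RatFunc K), algebraMap_eq]

lemma mul_algebraMap_denom (f : RatFunc K) : f * ψ f.denom = ψ f.num :=
  ((div_eq_iff (RatFunc.algebraMap_ne_zero f.denom_ne_zero)).mp (RatFunc.num_div_denom f)).symm

lemma ordGe_zero_iff_regAt {α : K} {f : RatFunc K} : ordGe α 0 f ↔ regAt α f := by
  rw [ordGe, neg_zero, zpow_zero, one_mul]

lemma ordGe_iff {α : K} {m : ℤ} {f : RatFunc K} :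
    ordGe α m f ↔
      ∃ a b : K[X], b.eval α ≠ 0 ∧ f * ψ b = (RatFunc.X - RatFunc.C α) ^ m * ψ a := by
  constructor
  · intro h
    set g := (RatFunc.X - RatFunc.C α) ^ (-m) * f
    refine ⟨g.num, g.denom, h, ?_⟩
    rw [← mul_algebraMap_denom, ← mul_assoc, ← mul_assoc, ← zpow_add₀ (X_sub_C_ne_zero α),
      add_neg_cancel, zpow_zero, one_mul]
  · rintro ⟨a, b, hb, heq⟩
    have hb0 : b ≠ 0 := fun h => hb (by simp [h])
    have hg : (RatFunc.X - RatFunc.C α) ^ (-m) * f = ψ a / ψ b := by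
      rw [eq_div_iff (RatFunc.algebraMap_ne_zero hb0), mul_assoc, heq, ← mul_assoc,
        ← zpow_add₀ (X_sub_C_ne_zero α), neg_add_cancel, zpow_zero, one_mul]
    obtain ⟨t, ht⟩ : ((RatFunc.X - RatFunc.C α) ^ (-m) * f).denom ∣ b := by
      rw [hg]; exact (RatFunc.denom_dvd hb0).mpr ⟨a, rfl⟩
    intro h0
    rw [ht, eval_mul, h0, zero_mul] at hb
    exact hb rfl

lemma ordGe_zpow_mul_iff {α : K} {m k : ℤ} {f : RatFunc K} :
    ordGe α (m + k) ((RatFunc.X - RatFunc.C α) ^ k * f) ↔ ordGe α m f := by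
  rw [ordGe, ordGe, ← mul_assoc, ← zpow_add₀ (X_sub_C_ne_zero α), neg_add,
    neg_add_cancel_right]

lemma ordGe_mono {α : K} {m m' : ℤ} {f : RatFunc K} (h : m' ≤ m) (hf : ordGe α m f) :
    ordGe α m' f := by
  obtain ⟨a, b, hb, heq⟩ := ordGe_iff.mp hf
  refine ordGe_iff.mpr ⟨(X - C α) ^ (m - m').toNat * a, b, hb, ?_⟩
  rw [heq, map_mul, ← X_sub_C_zpow_natCast, ← mul_assoc, ← zpow_add₀ (X_sub_C_ne_zero α),
    Int.toNat_of_nonneg (by omega), add_sub_cancel]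

lemma ordGe_add {α : K} {m : ℤ} {f g : RatFunc K} (hf : ordGe α m f) (hg : ordGe α m g) :
    ordGe α m (f + g) := by
  obtain ⟨a₁, b₁, hb₁, h₁⟩ := ordGe_iff.mp hf
  obtain ⟨a₂, b₂, hb₂, h₂⟩ := ordGe_iff.mp hg
  refine ordGe_iff.mpr ⟨a₁ * b₂ + a₂ * b₁, b₁ * b₂, by simp [hb₁, hb₂], ?_⟩
  calc (f + g) * ψ (b₁ * b₂) = (f * ψ b₁) * ψ b₂ + (g * ψ b₂) * ψ b₁ := by
        rw [map_mul]; ring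
    _ = _ := by rw [h₁, h₂, map_add, map_mul, map_mul]; ring

lemma ordGe_mul {α : K} {m : ℤ} {f g : RatFunc K} (hf : ordGe α m f) (hg : ordGe α 0 g) :
    ordGe α m (f * g) := by
  obtain ⟨a₁, b₁, hb₁, h₁⟩ := ordGe_iff.mp hf
  obtain ⟨a₂, b₂, hb₂, h₂⟩ := ordGe_iff.mp hg
  refine ordGe_iff.mpr ⟨a₁ * a₂, b₁ * b₂, by simp [hb₁, hb₂], ?_⟩
  calc f * g * ψ (b₁ * b₂) = (f * ψ b₁) * (g * ψ b₂) := by rw [map_mul]; ring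
    _ = _ := by rw [h₁, h₂, zpow_zero, map_mul]; ring

lemma ordGe_algebraMap (α : K) (q : K[X]) : ordGe α 0 (ψ q) :=
  ordGe_iff.mpr ⟨q, 1, by simp, by simp⟩

lemma ordGe_smul {α : K} {m : ℤ} (c : K) {f : RatFunc K} (hf : ordGe α m f) :
    ordGe α m (c • f) := by
  rw [smul_eq_algebraMap_C_mul, mul_comm]
  exact ordGe_mul hf (ordGe_algebraMap α _)

def ordGeSubmodule (α : K) (m : ℤ) : Submodule K (RatFunc K) where
  carrier := {f | ordGe α m f}
  add_mem' := ordGe_add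
  zero_mem' := ordGe_iff.mpr ⟨0, 1, by simp, by simp⟩
  smul_mem' c _ := ordGe_smul c

lemma ordGe_sum {α : K} {m : ℤ} {ι : Type*} (s : Finset ι) {f : ι → RatFunc K}
    (h : ∀ i ∈ s, ordGe α m (f i)) : ordGe α m (∑ i ∈ s, f i) :=
  (ordGeSubmodule α m).sum_mem h

lemma ordGe_add_sum_sub_ite [DecidableEq K] {s : Finset K} {g : K → RatFunc K}
    (hg : ∀ α ∈ s, ∀ β, β ≠ α → ordGe β 0 (g α)) (q : K[X]) (γ : K) :
    ordGe γ 0 (ψ q + ∑ α ∈ s, g α - if γ ∈ s then g γ else 0) := by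
  have hrest : ordGe γ 0 (ψ q + ∑ α ∈ s.erase γ, g α) :=
    ordGe_add (ordGe_algebraMap γ q) (ordGe_sum _ fun α hα =>
      hg α (Finset.mem_of_mem_erase hα) γ (Finset.ne_of_mem_erase hα).symm)
  split_ifs with hγ
  · rwa [← Finset.add_sum_erase _ _ hγ, add_left_comm, add_sub_cancel_left]
  · rwa [Finset.erase_eq_of_notMem hγ, ← sub_zero (_ + _)] at hrest

lemma ordGe_zpow_of_ne {α β : K} (h : β ≠ α) (k : ℤ) :
    ordGe β 0 ((RatFunc.X - RatFunc.C α) ^ k) := by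
  rcases le_or_gt 0 k with hk | hk
  · lift k to ℕ using hk
    rw [X_sub_C_zpow_natCast]; exact ordGe_algebraMap β _
  · refine ordGe_iff.mpr ⟨1, (X - C α) ^ (-k).toNat, by simp [sub_eq_zero, h], ?_⟩
    rw [← X_sub_C_zpow_natCast, Int.toNat_of_nonneg (by omega),
      ← zpow_add₀ (X_sub_C_ne_zero α), add_neg_cancel]
    simp

lemma ordGe_ratDeriv {α : K} {f : RatFunc K} (hf : ordGe α 0 f) : ordGe α 0 (ratDeriv f) := by
  have hd : f.denom.eval α ≠ 0 := ordGe_zero_iff_regAt.mp hf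
  refine ordGe_iff.mpr ⟨derivative f.num * f.denom - f.num * derivative f.denom, f.denom ^ 2,
    by simp [hd], ?_⟩
  rw [zpow_zero, one_mul, ratDeriv,
    div_mul_cancel₀ _ (RatFunc.algebraMap_ne_zero (pow_ne_zero 2 f.denom_ne_zero)),
    map_sub, map_mul, map_mul]

lemma ordGe_applyOp {α : K} {f : RatFunc K} (r : ℕ) (p : ℕ → K[X]) (hf : ordGe α 0 f) :
    ordGe α 0 (applyOp r p f) :=
  ordGe_sum _ fun i _ =>
    ordGe_mul (ordGe_algebraMap α (p i))
      (Function.Iterate.rec (ordGe α 0) hf (fun _ => ordGe_ratDeriv) i)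

lemma exists_ordGe (α : K) (f : RatFunc K) : ∃ n : ℕ, ordGe α (-n) f := by
  obtain ⟨t, ht, htd⟩ :=
    exists_eq_pow_rootMultiplicity_mul_and_not_dvd f.denom f.denom_ne_zero α
  set m := rootMultiplicity α f.denom
  refine ⟨m, ordGe_iff.mpr ⟨f.num, t, fun h0 => htd (dvd_iff_isRoot.mpr h0), ?_⟩⟩
  rw [← mul_algebraMap_denom f, ht, map_mul, ← X_sub_C_zpow_natCast, zpow_neg,
    zpow_natCast]
  have := X_sub_C_ne_zero α
  field_simp

lemma ordGe_one_sub_eval {α : K} {g : RatFunc K} (hg : ordGe α 0 g) :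
    ordGe α 1 (g - (g.num.eval α / g.denom.eval α) • 1) := by
  have hd : g.denom.eval α ≠ 0 := ordGe_zero_iff_regAt.mp hg
  obtain ⟨u, hu⟩ : X - C α ∣ g.num - C (g.num.eval α / g.denom.eval α) * g.denom := by
    rw [dvd_iff_isRoot]; simp [div_mul_cancel₀ _ hd]
  refine ordGe_iff.mpr ⟨u, g.denom, hd, ?_⟩
  rw [zpow_one, X_sub_C_eq_algebraMap, ← map_mul, ← hu, map_sub, map_mul, sub_mul,
    mul_algebraMap_denom, smul_eq_algebraMap_C_mul, mul_one]

lemma exists_leadingCoeff_ordGe {α : K} {n : ℕ} {f : RatFunc K} (h : ordGe α (-(n + 1)) f)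
    (hn : ¬ ordGe α (-n) f) :
    ∃ c : K, c ≠ 0 ∧
      ordGe α (-n) (f - c • (RatFunc.X - RatFunc.C α) ^ (-(n + 1 : ℤ))) := by
  set g := (RatFunc.X - RatFunc.C α) ^ ((n : ℤ) + 1) * f
  have hg : ordGe α 0 g := by
    have := ordGe_zpow_mul_iff (k := (n : ℤ) + 1) |>.mpr h
    rwa [neg_add_cancel] at this
  set c := g.num.eval α / g.denom.eval α
  have hsub : f - c • (RatFunc.X - RatFunc.C α) ^ (-(n + 1 : ℤ)) =
      (RatFunc.X - RatFunc.C α) ^ (-(n + 1 : ℤ)) * (g - c • 1) := by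
    rw [mul_sub, ← mul_assoc, ← zpow_add₀ (X_sub_C_ne_zero α), neg_add_cancel, zpow_zero,
      one_mul, mul_smul_comm, mul_one]
  have hlead : ordGe α (-n) ((RatFunc.X - RatFunc.C α) ^ (-(n + 1 : ℤ)) * (g - c • 1)) := by
    have := ordGe_zpow_mul_iff (k := -((n : ℤ) + 1)) |>.mpr (ordGe_one_sub_eval hg)
    rwa [show (1 : ℤ) + -(n + 1) = -n by ring] at this
  rw [← hsub] at hlead
  refine ⟨c, fun hc => hn ?_, hlead⟩
  rwa [hc, zero_smul, sub_zero] at hlead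

lemma degLe_mono {m m' : ℤ} {f : RatFunc K} (h : m ≤ m') (hf : degLe m f) : degLe m' f :=
  hf.imp_right (·.trans h)

lemma degLe_add {m : ℤ} {f g : RatFunc K} (hf : degLe m f) (hg : degLe m g) :
    degLe m (f + g) := by
  rcases hf with rfl | hf
  · rwa [zero_add]
  rcases hg with rfl | hg
  · rw [add_zero]; exact Or.inr hf
  rcases eq_or_ne (f + g) 0 with hfg | hfg
  · exact Or.inl hfg
  rcases eq_or_ne g 0 with rfl | hg0
  · rw [add_zero]; exact Or.inr hf
  exact Or.inr ((RatFunc.intDegree_add_le hg0 hfg).trans (max_le hf hg))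

lemma degLe_smul {m : ℤ} (c : K) {f : RatFunc K} (hf : degLe m f) : degLe m (c • f) := by
  rcases eq_or_ne c 0 with rfl | hc
  · rw [zero_smul]; exact Or.inl rfl
  rcases eq_or_ne f 0 with rfl | hf0
  · rw [smul_zero]; exact Or.inl rfl
  refine Or.inr ?_
  rw [smul_eq_algebraMap_C_mul, RatFunc.intDegree_mul (RatFunc.algebraMap_ne_zero (by simpa)) hf0,
    RatFunc.intDegree_polynomial, natDegree_C, Nat.cast_zero, zero_add]
  exact hf.resolve_left hf0

def degLeSubmodule (m : ℤ) : Submodule K (RatFunc K) where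
  carrier := {f | degLe m f}
  add_mem' := degLe_add
  zero_mem' := Or.inl rfl
  smul_mem' c _ := degLe_smul c

lemma exists_degLe (f : RatFunc K) : ∃ n : ℕ, degLe (n - 1) f :=
  ⟨(f.intDegree + 1).toNat, Or.inr (by omega)⟩

lemma X_zpow_natCast (k : ℕ) : (RatFunc.X : RatFunc K) ^ (k : ℤ) = ψ (X ^ k) := by
  rw [zpow_natCast, map_pow, RatFunc.algebraMap_X]

lemma exists_leadingCoeff_degLe {n : ℕ} {f : RatFunc K} (h : degLe n f)
    (hn : ¬ degLe (n - 1) f) :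
    ∃ c : K, c ≠ 0 ∧ degLe (n - 1) (f - c • RatFunc.X ^ (n : ℤ)) := by
  have hf0 : f ≠ 0 := fun h0 => hn (Or.inl h0)
  have hdeg : (f.num.natDegree : ℤ) - f.denom.natDegree = n := by
    have := h.resolve_left hf0
    have := (not_or.mp hn).2
    rw [RatFunc.intDegree] at *
    omega
  have hnum : f.num ≠ 0 := RatFunc.num_ne_zero hf0
  have hlcd : f.denom.leadingCoeff ≠ 0 := leadingCoeff_ne_zero.mpr f.denom_ne_zero
  set c := f.num.leadingCoeff / f.denom.leadingCoeff
  have hc : c ≠ 0 := div_ne_zero (leadingCoeff_ne_zero.mpr hnum) hlcd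
  set q := C c * X ^ n * f.denom
  have hq : q ≠ 0 := by simp [q, hc, f.denom_ne_zero]
  have hdegq : q.natDegree = f.num.natDegree := by
    rw [natDegree_mul (by simp [hc]) f.denom_ne_zero, natDegree_C_mul_X_pow _ _ hc]
    omega
  have hrepr : f - c • RatFunc.X ^ (n : ℤ) = ψ (f.num - q) / ψ f.denom := by
    rw [eq_div_iff (RatFunc.algebraMap_ne_zero f.denom_ne_zero), sub_mul, mul_algebraMap_denom,
      smul_eq_algebraMap_C_mul, X_zpow_natCast, map_sub]
    simp [q, mul_assoc]
  refine ⟨c, hc, ?_⟩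
  rw [hrepr]
  rcases eq_or_ne (f.num - q) 0 with hN | hN
  · rw [hN, map_zero, zero_div]; exact Or.inl rfl
  refine Or.inr ?_
  have hlt : (f.num - q).natDegree < f.num.natDegree := by
    refine natDegree_lt_natDegree hN (degree_sub_lt_left ?_ hnum ?_)
    · rw [degree_eq_natDegree hnum, degree_eq_natDegree hq, hdegq]
    · simp [q, c, leadingCoeff_mul, div_mul_cancel₀ _ hlcd]
  rw [RatFunc.intDegree_div (RatFunc.algebraMap_ne_zero hN)
    (RatFunc.algebraMap_ne_zero f.denom_ne_zero), RatFunc.intDegree_polynomial,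
    RatFunc.intDegree_polynomial]
  omega

noncomputable def poleFiltration (α : K) (n : ℕ) : AddSubgroup (RatFunc K) :=
  (ordGeSubmodule α (-n)).toAddSubgroup

lemma mem_poleFiltration {α : K} {n : ℕ} {f : RatFunc K} :
    f ∈ poleFiltration α n ↔ ordGe α (-n) f :=
  Iff.rfl

noncomputable def regularAwayFrom (α : K) : AddSubgroup (RatFunc K) :=
  (⨅ (β : K) (_ : β ≠ α), ordGeSubmodule β 0).toAddSubgroup

lemma mem_regularAwayFrom {α : K} {f : RatFunc K} :
    f ∈ regularAwayFrom α ↔ ∀ β, β ≠ α → ordGe β 0 f := by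
  simp [regularAwayFrom, Submodule.mem_iInf]; rfl

lemma localReduction_step (r : ℕ) (p : ℕ → K[X]) (σα : K → ℤ) (indα : K → ℤ → K)
    (hindα : ∀ (α : K) (s : ℤ),
      ordGe α (-s + σα α + 1)
        (applyOp r p ((RatFunc.X - RatFunc.C α) ^ (-s)) -
          indα α (-s) • (RatFunc.X - RatFunc.C α) ^ (-s + σα α)))
    (Hloc : K → RatFunc K → RatFunc K)
    (hHloc1 : ∀ (α : K) (R : RatFunc K) (c : K) (s : ℤ), 0 < s → c ≠ 0 →
      ordGe α (-s + 1) (R - c • (RatFunc.X - RatFunc.C α) ^ (-s)) →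
      (indα α (-σα α - s) ≠ 0 →
        Hloc α R = Hloc α (R - (c / indα α (-σα α - s)) •
          applyOp r p ((RatFunc.X - RatFunc.C α) ^ (-s - σα α)))) ∧
      (indα α (-σα α - s) = 0 →
        Hloc α R = c • (RatFunc.X - RatFunc.C α) ^ (-s) +
          Hloc α (R - c • (RatFunc.X - RatFunc.C α) ^ (-s))))
    (α : K) (n : ℕ) (R : RatFunc K) (hR : R ∈ poleFiltration α (n + 1)) :
    ∃ e, R - e ∈ poleFiltration α n ∧
      ReducesLeadingTerm (Hloc α) (poleFiltration α) (regularAwayFrom α) n e := by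
  by_cases hRn : ordGe α (-n) R
  · exact ⟨0, by rwa [sub_zero], reducesLeadingTerm_zero n⟩
  set s : ℤ := n + 1
  rw [mem_poleFiltration, Nat.cast_succ] at hR
  obtain ⟨c, hc, hlead⟩ := exists_leadingCoeff_ordGe hR hRn
  set θ := RatFunc.X - RatFunc.C α
  refine ⟨c • θ ^ (-s), hlead, ?_⟩
  have hrec := fun T (hT : T - c • θ ^ (-s) ∈ poleFiltration α n) =>
    hHloc1 α T c s (by positivity) hc (by rwa [show -s + 1 = -n by ring])
  set d := indα α (-σα α - s)
  by_cases hd : d = 0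
  · exact Or.inr fun T hT => (hrec T hT).2 hd
  refine Or.inl
    ⟨(c / d) • applyOp r p (θ ^ (-s - σα α)), ?_, ?_, fun T hT => (hrec T hT).1 hd⟩
  · exact mem_regularAwayFrom.mpr fun β hβ =>
      ordGe_smul _ (ordGe_applyOp r p (ordGe_zpow_of_ne hβ _))
  · have hind : ordGe α (-n) (applyOp r p (θ ^ (-s - σα α)) - d • θ ^ (-s)) := by
      have := hindα α (s + σα α)
      rw [show -(s + σα α) + σα α + 1 = -n by ring,
        show -(s + σα α) + σα α = -s by ring] at this
      convert this using 4 <;> ring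
    have : c • θ ^ (-s) - (c / d) • applyOp r p (θ ^ (-s - σα α)) =
        -(c / d) • (applyOp r p (θ ^ (-s - σα α)) - d • θ ^ (-s)) := by
      rw [smul_sub, smul_smul, neg_mul, div_mul_cancel₀ _ hd, neg_smul, neg_smul]; abel
    rw [this]
    exact ordGe_smul _ hind

theorem localReduction_spec (r : ℕ) (p : ℕ → K[X]) (σα : K → ℤ) (indα : K → ℤ → K)
    (hindα : ∀ (α : K) (s : ℤ),
      ordGe α (-s + σα α + 1)
        (applyOp r p ((RatFunc.X - RatFunc.C α) ^ (-s)) -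
          indα α (-s) • (RatFunc.X - RatFunc.C α) ^ (-s + σα α)))
    (Hloc : K → RatFunc K → RatFunc K)
    (hHloc0 : ∀ (α : K) (R : RatFunc K), ordGe α 0 R → Hloc α R = R)
    (hHloc1 : ∀ (α : K) (R : RatFunc K) (c : K) (s : ℤ), 0 < s → c ≠ 0 →
      ordGe α (-s + 1) (R - c • (RatFunc.X - RatFunc.C α) ^ (-s)) →
      (indα α (-σα α - s) ≠ 0 →
        Hloc α R = Hloc α (R - (c / indα α (-σα α - s)) •
          applyOp r p ((RatFunc.X - RatFunc.C α) ^ (-s - σα α)))) ∧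
      (indα α (-σα α - s) = 0 →
        Hloc α R = c • (RatFunc.X - RatFunc.C α) ^ (-s) +
          Hloc α (R - c • (RatFunc.X - RatFunc.C α) ^ (-s))))
    (α : K) (R : RatFunc K) :
    Hloc α (Hloc α R) = Hloc α R ∧ (∀ β, β ≠ α → ordGe β 0 (Hloc α R - R)) ∧
      ∀ u, ordGe α 0 u → Hloc α (R + u) = Hloc α R + u := by
  have hF0 {f : RatFunc K} : f ∈ poleFiltration α 0 ↔ ordGe α 0 f := by
    rw [mem_poleFiltration, Nat.cast_zero, neg_zero]
  obtain ⟨hidem, hG, hequiv⟩ := filteredReduction_spec (G := regularAwayFrom α)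
    (fun _ _ h _ hf => ordGe_mono (by omega) hf) (fun R hR => hHloc0 α R (hF0.mp hR))
    (localReduction_step r p σα indα hindα Hloc hHloc1 α) (exists_ordGe α) R
  exact ⟨hidem, mem_regularAwayFrom.mp hG, fun u hu => hequiv u (hF0.mpr hu)⟩

noncomputable def degreeFiltration (n : ℕ) : AddSubgroup (RatFunc K) :=
  (degLeSubmodule (n - 1)).toAddSubgroup

lemma mem_degreeFiltration {n : ℕ} {f : RatFunc K} :
    f ∈ degreeFiltration n ↔ degLe (n - 1) f :=
  Iff.rfl

noncomputable def regularEverywhere : AddSubgroup (RatFunc K) :=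
  (⨅ β : K, ordGeSubmodule β 0).toAddSubgroup

lemma mem_regularEverywhere {f : RatFunc K} : f ∈ regularEverywhere ↔ ∀ β, ordGe β 0 f := by
  simp [regularEverywhere, Submodule.mem_iInf]; rfl

lemma reductionAtInfinity_step (r : ℕ) (p : ℕ → K[X]) (σinf : ℤ) (indinf : ℤ → K)
    (hindinf : ∀ s : ℤ,
      degLe (s - σinf - 1)
        (applyOp r p (RatFunc.X ^ s) - indinf (-s) • RatFunc.X ^ (s - σinf)))
    (Hinf : RatFunc K → RatFunc K)
    (hHinf1 : ∀ (R : RatFunc K) (c : K) (s : ℤ), 0 ≤ s → c ≠ 0 →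
      degLe (s - 1) (R - c • RatFunc.X ^ s) →
      ((indinf (-s - σinf) ≠ 0 ∧ 0 ≤ s + σinf) →
        Hinf R = Hinf (R - (c / indinf (-s - σinf)) • applyOp r p (RatFunc.X ^ (s + σinf)))) ∧
      (¬ (indinf (-s - σinf) ≠ 0 ∧ 0 ≤ s + σinf) →
        Hinf R = c • RatFunc.X ^ s + Hinf (R - c • RatFunc.X ^ s)))
    (n : ℕ) (R : RatFunc K) (hR : R ∈ degreeFiltration (n + 1)) :
    ∃ e, R - e ∈ degreeFiltration n ∧
      ReducesLeadingTerm Hinf degreeFiltration regularEverywhere n e := by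
  by_cases hRn : degLe (n - 1) R
  · exact ⟨0, by rwa [sub_zero], reducesLeadingTerm_zero n⟩
  rw [mem_degreeFiltration, Nat.cast_succ, add_sub_cancel_right] at hR
  obtain ⟨c, hc, hlead⟩ := exists_leadingCoeff_degLe hR hRn
  refine ⟨c • RatFunc.X ^ (n : ℤ), hlead, ?_⟩
  have hrec := fun T (hT : T - c • RatFunc.X ^ (n : ℤ) ∈ degreeFiltration n) =>
    hHinf1 T c n n.cast_nonneg hc hT
  set d := indinf (-n - σinf)
  by_cases hcond : d ≠ 0 ∧ 0 ≤ n + σinf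
  · refine Or.inl ⟨(c / d) • applyOp r p (RatFunc.X ^ (n + σinf)), ?_, ?_,
      fun T hT => (hrec T hT).1 hcond⟩
    · obtain ⟨k, hk⟩ := Int.eq_ofNat_of_zero_le hcond.2
      rw [mem_regularEverywhere, hk, X_zpow_natCast]
      exact fun β => ordGe_smul _ (ordGe_applyOp r p (ordGe_algebraMap β _))
    · have hind :
          degLe (n - 1) (applyOp r p (RatFunc.X ^ (n + σinf)) - d • RatFunc.X ^ (n : ℤ)) := by
        have := hindinf (n + σinf)
        rw [add_sub_cancel_right] at this
        convert this using 4; ring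
      have : c • RatFunc.X ^ (n : ℤ) - (c / d) • applyOp r p (RatFunc.X ^ (n + σinf)) =
          -(c / d) • (applyOp r p (RatFunc.X ^ (n + σinf)) - d • RatFunc.X ^ (n : ℤ)) := by
        rw [smul_sub, smul_smul, neg_mul, div_mul_cancel₀ _ hcond.1, neg_smul, neg_smul]; abel
      rw [this]
      exact degLe_smul _ hind
  · exact Or.inr fun T hT => (hrec T hT).2 hcond

theorem reductionAtInfinity_spec (r : ℕ) (p : ℕ → K[X]) (σinf : ℤ) (indinf : ℤ → K)
    (hindinf : ∀ s : ℤ,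
      degLe (s - σinf - 1)
        (applyOp r p (RatFunc.X ^ s) - indinf (-s) • RatFunc.X ^ (s - σinf)))
    (Hinf : RatFunc K → RatFunc K)
    (hHinf0 : ∀ R : RatFunc K, degLe (-1) R → Hinf R = R)
    (hHinf1 : ∀ (R : RatFunc K) (c : K) (s : ℤ), 0 ≤ s → c ≠ 0 →
      degLe (s - 1) (R - c • RatFunc.X ^ s) →
      ((indinf (-s - σinf) ≠ 0 ∧ 0 ≤ s + σinf) →
        Hinf R = Hinf (R - (c / indinf (-s - σinf)) • applyOp r p (RatFunc.X ^ (s + σinf)))) ∧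
      (¬ (indinf (-s - σinf) ≠ 0 ∧ 0 ≤ s + σinf) →
        Hinf R = c • RatFunc.X ^ s + Hinf (R - c • RatFunc.X ^ s)))
    (R : RatFunc K) :
    Hinf (Hinf R) = Hinf R ∧ ∀ β, ordGe β 0 (Hinf R - R) := by
  obtain ⟨hidem, hG, -⟩ := filteredReduction_spec (G := regularEverywhere)
    (fun _ _ h _ hf => degLe_mono (by omega) hf)
    (fun R hR => hHinf0 R (by rwa [mem_degreeFiltration, Nat.cast_zero, zero_sub] at hR))
    (reductionAtInfinity_step r p σinf indinf hindinf Hinf hHinf1) exists_degLe R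
  exact ⟨hidem, mem_regularEverywhere.mp hG⟩

end WeakHermite

open WeakHermite

theorem weak_hermite_idempotent_general {K : Type*} [Field K]
    (H : RatFunc K → RatFunc K)
    (r : ℕ) (p : ℕ → K[X])
    (σα : K → ℤ) (σinf : ℤ) (indα : K → ℤ → K) (indinf : ℤ → K)
    -- the defining property of the indicial functions:
    -- `M((x−α)^{−s}) = ind_α(−s)(x−α)^{−s+σ_α}(1+o(1))` at `α`,
    (hindα : ∀ (α : K) (s : ℤ),
      ordGe α (-s + σα α + 1)
        (applyOp r p ((RatFunc.X - RatFunc.C α) ^ (-s)) -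
          indα α (-s) • (RatFunc.X - RatFunc.C α) ^ (-s + σα α)))
    -- `M(x^s) = ind_∞(−s) x^{s−σ_∞}(1+o(1))` at infinity:
    (hindinf : ∀ s : ℤ,
      degLe (s - σinf - 1)
        (applyOp r p (RatFunc.X ^ s) - indinf (-s) • RatFunc.X ^ (s - σinf)))
    (Hloc : K → RatFunc K → RatFunc K) (Hinf : RatFunc K → RatFunc K)
    -- the recursive definition of the local reduction `H_α`:
    (hHloc0 : ∀ (α : K) (R : RatFunc K), ordGe α 0 R → Hloc α R = R)
    (hHloc1 : ∀ (α : K) (R : RatFunc K) (c : K) (s : ℤ), 0 < s → c ≠ 0 →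
      ordGe α (-s + 1) (R - c • (RatFunc.X - RatFunc.C α) ^ (-s)) →
      (indα α (-σα α - s) ≠ 0 →
        Hloc α R = Hloc α (R - (c / indα α (-σα α - s)) •
          applyOp r p ((RatFunc.X - RatFunc.C α) ^ (-s - σα α)))) ∧
      (indα α (-σα α - s) = 0 →
        Hloc α R = c • (RatFunc.X - RatFunc.C α) ^ (-s) +
          Hloc α (R - c • (RatFunc.X - RatFunc.C α) ^ (-s))))
    -- the recursive definition of the reduction `H_∞` at infinity:
    (hHinf0 : ∀ R : RatFunc K, degLe (-1) R → Hinf R = R)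
    (hHinf1 : ∀ (R : RatFunc K) (c : K) (s : ℤ), 0 ≤ s → c ≠ 0 →
      degLe (s - 1) (R - c • RatFunc.X ^ s) →
      ((indinf (-s - σinf) ≠ 0 ∧ 0 ≤ s + σinf) →
        Hinf R = Hinf (R - (c / indinf (-s - σinf)) • applyOp r p (RatFunc.X ^ (s + σinf)))) ∧
      (¬ (indinf (-s - σinf) ≠ 0 ∧ 0 ≤ s + σinf) →
        Hinf R = c • RatFunc.X ^ s + Hinf (R - c • RatFunc.X ^ s)))
    -- `H(R) = H_∞(R_{(∞)} + ∑_α H_α(R_{(α)}))` via partial fractions: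
    (hH : ∀ R : RatFunc K, ∃ (S : Finset K) (pol : K → RatFunc K) (pinf : RatFunc K),
      (∃ q : K[X], pinf = algebraMap K[X] (RatFunc K) q) ∧
      (∀ α ∈ S, degLe (-1) (pol α) ∧ ∀ β : K, β ≠ α → ordGe β 0 (pol α)) ∧
      R = pinf + ∑ α ∈ S, pol α ∧
      H R = Hinf (pinf + ∑ α ∈ S, Hloc α (pol α)))
     :
    ∀ R : RatFunc K, H (H R) = H R := by
  classical
  intro R
  have hloc := localReduction_spec r p σα indα hindα Hloc hHloc0 hHloc1
  have hinf := reductionAtInfinity_spec r p σinf indinf hindinf Hinf hHinf0 hHinf1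
  have hfix_of_sub {γ : K} {T f : RatFunc K} (hT : Hloc γ T = T) (hf : ordGe γ 0 (f - T)) :
      Hloc γ f = f := by
    simpa [hT] using (hloc γ T).2.2 _ hf
  obtain ⟨S, pol, _, ⟨q, rfl⟩, hpol, -, hHR⟩ := hH R
  obtain ⟨S', pol', _, ⟨q', rfl⟩, hpol', hsum', hHHR⟩ := hH (H R)
  have hfix (γ : K) : Hloc γ (H R) = H R := by
    have hreg := ordGe_add_sum_sub_ite (g := fun α => Hloc α (pol α)) (fun α hα β hβ => by
      simpa using ordGe_add ((hloc α (pol α)).2.1 β hβ) ((hpol α hα).2 β hβ)) q γ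
    have hW := (hinf (algebraMap K[X] (RatFunc K) q + ∑ α ∈ S, Hloc α (pol α))).2 γ
    rw [← hHR] at hW
    refine hfix_of_sub (T := if γ ∈ S then Hloc γ (pol γ) else 0) ?_ ?_
    · split_ifs
      exacts [(hloc γ _).1, hHloc0 γ 0 (zero_mem (ordGeSubmodule γ 0))]
    · convert ordGe_add hW hreg using 1; abel
  have hfix' : ∀ γ ∈ S', Hloc γ (pol' γ) = pol' γ := fun γ hγ => by
    refine hfix_of_sub (hfix γ) ?_
    have := ordGe_add_sum_sub_ite (fun α hα => (hpol' α hα).2) q' γ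
    rw [if_pos hγ, ← hsum'] at this
    simpa using ordGe_smul (-1) this
  rw [hHHR, Finset.sum_congr rfl hfix', ← hsum', hHR, (hinf _).1]

/-- the weak Hermite reduction `H` associated with `M` is idempotent:
`H(H(R)) = H(R)` for all `R ∈ K(x)`. -/
theorem weak_hermite_idempotent {K : Type*} [Field K] [CharZero K]
    [IsAlgClosed K]
    (H : RatFunc K → RatFunc K)
    (r : ℕ) (p : ℕ → K[X]) (hpr : p r ≠ 0)
    (σα : K → ℤ) (σinf : ℤ) (indα : K → ℤ → K) (indinf : ℤ → K)
    -- the shifts of `M` at finite points and at infinity: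
    (hσα : ∀ α : K, IsLeast {m : ℤ | ∃ i ≤ r, p i ≠ 0 ∧
        m = (Polynomial.rootMultiplicity α (p i) : ℤ) - i} (σα α))
    (hσinf : IsGreatest {m : ℤ | ∃ i ≤ r, p i ≠ 0 ∧ m = (i : ℤ) - (p i).natDegree} σinf)
    -- the defining property of the indicial functions:
    -- `M((x−α)^{−s}) = ind_α(−s)(x−α)^{−s+σ_α}(1+o(1))` at `α`,
    (hindα : ∀ (α : K) (s : ℤ),
      ordGe α (-s + σα α + 1)
        (applyOp r p ((RatFunc.X - RatFunc.C α) ^ (-s)) -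
          indα α (-s) • (RatFunc.X - RatFunc.C α) ^ (-s + σα α)))
    -- `M(x^s) = ind_∞(−s) x^{s−σ_∞}(1+o(1))` at infinity:
    (hindinf : ∀ s : ℤ,
      degLe (s - σinf - 1)
        (applyOp r p (RatFunc.X ^ s) - indinf (-s) • RatFunc.X ^ (s - σinf)))
    (Hloc : K → RatFunc K → RatFunc K) (Hinf : RatFunc K → RatFunc K)
    -- the recursive definition of the local reduction `H_α`:
    (hHloc0 : ∀ (α : K) (R : RatFunc K), ordGe α 0 R → Hloc α R = R)
    (hHloc1 : ∀ (α : K) (R : RatFunc K) (c : K) (s : ℤ), 0 < s → c ≠ 0 →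
      ordGe α (-s + 1) (R - c • (RatFunc.X - RatFunc.C α) ^ (-s)) →
      (indα α (-σα α - s) ≠ 0 →
        Hloc α R = Hloc α (R - (c / indα α (-σα α - s)) •
          applyOp r p ((RatFunc.X - RatFunc.C α) ^ (-s - σα α)))) ∧
      (indα α (-σα α - s) = 0 →
        Hloc α R = c • (RatFunc.X - RatFunc.C α) ^ (-s) +
          Hloc α (R - c • (RatFunc.X - RatFunc.C α) ^ (-s))))
    -- the recursive definition of the reduction `H_∞` at infinity:
    (hHinf0 : ∀ R : RatFunc K, degLe (-1) R → Hinf R = R)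
    (hHinf1 : ∀ (R : RatFunc K) (c : K) (s : ℤ), 0 ≤ s → c ≠ 0 →
      degLe (s - 1) (R - c • RatFunc.X ^ s) →
      ((indinf (-s - σinf) ≠ 0 ∧ 0 ≤ s + σinf) →
        Hinf R = Hinf (R - (c / indinf (-s - σinf)) • applyOp r p (RatFunc.X ^ (s + σinf)))) ∧
      (¬ (indinf (-s - σinf) ≠ 0 ∧ 0 ≤ s + σinf) →
        Hinf R = c • RatFunc.X ^ s + Hinf (R - c • RatFunc.X ^ s)))
    -- `H(R) = H_∞(R_{(∞)} + ∑_α H_α(R_{(α)}))` via partial fractions: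
    (hH : ∀ R : RatFunc K, ∃ (S : Finset K) (pol : K → RatFunc K) (pinf : RatFunc K),
      (∃ q : K[X], pinf = algebraMap K[X] (RatFunc K) q) ∧
      (∀ α ∈ S, degLe (-1) (pol α) ∧ ∀ β : K, β ≠ α → ordGe β 0 (pol α)) ∧
      R = pinf + ∑ α ∈ S, pol α ∧
      H R = Hinf (pinf + ∑ α ∈ S, Hloc α (pol α)))
     :
    ∀ R : RatFunc K, H (H R) = H R :=
  weak_hermite_idempotent_general H r p σα σinf indα indinf hindα hindinf Hloc Hinf hHloc0 hHloc1
    hHinf0 hHinf1 hH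
end

section
/- Let K be a field of characteristic zero, M a linear differential operator with polynomial coefficients, and H the weak Hermite reduction with respect to M. Then over the algebraic closure of K, the exceptional space Exc_M = H(M(K̄(x))) is spanned by the finite family: (a) H(M((x−α)^{−s})) for α a zero of the leading coefficient of M, s > 0 with ind_α(−s) = 0; (b) H(M((x−α)^{−s})) for α a zero of the leading coefficient, 0 < s ≤ σ_α; (c) H(M(x^s)) for s ≥ 0 with ind_∞(−s) = 0. In particular, Exc_M is finite-dimensional over K̄. -/
open Polynomial

/-!
Over an algebraically closed field, partial fractions show that `K(x)` is spanned by the monomials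
`x ^ s` (`s ≥ 0`) and `(x - α) ^ (-s)` (`s > 0`), so `Exc_M` is spanned by their images under
`H ∘ M`. When `ind_α(-s) ≠ 0` and `s > σ_α`, the leading term `ind_α(-s) (x - α) ^ (-s + σ_α)` of
`M((x - α) ^ (-s))` triggers a reduction step of `H_α` that subtracts `M((x - α) ^ (-s))` itself,
leaving only a polynomial, so `H(M((x - α) ^ (-s))) = 0`. Where the leading coefficient of `M`
does not vanish, `σ_α = -r` and `ind_α(-s) ≠ 0` for every `s > 0`. The same argument at infinity
disposes of `x ^ s` when `ind_∞(-s) ≠ 0`. Finiteness: `ind_α(-s)`, and `ind_∞(-s)` for large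
`s`, are values at `s` of nonzero polynomials, built from the coefficients of `M` that realise
the shifts.
-/

section

variable {K : Type*} [Field K]

local notation "ofPoly" => algebraMap K[X] (RatFunc K)

lemma algebraMap_div_eq_div_iff {p q p' q' : K[X]} (hq : q ≠ 0) (hq' : q' ≠ 0) :
    ofPoly p / ofPoly q = ofPoly p' / ofPoly q' ↔ p * q' = p' * q := by
  rw [div_eq_div_iff (RatFunc.algebraMap_ne_zero hq) (RatFunc.algebraMap_ne_zero hq'),
    ← map_mul, ← map_mul]
  exact (RatFunc.algebraMap_injective K).eq_iff

lemma algebraMap_X_sub_C (α : K) : ofPoly (X - C α) = RatFunc.X - RatFunc.C α := by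
  rw [map_sub, RatFunc.algebraMap_X, RatFunc.algebraMap_C]

lemma RatFunc.X_sub_C_ne_zero (α : K) : (RatFunc.X - RatFunc.C α : RatFunc K) ≠ 0 := by
  rw [← algebraMap_X_sub_C]
  exact RatFunc.algebraMap_ne_zero (Polynomial.X_sub_C_ne_zero α)

lemma X_sub_C_zpow_of_nonneg {k : ℤ} (hk : 0 ≤ k) (α : K) :
    (RatFunc.X - RatFunc.C α) ^ k = ofPoly ((X - C α) ^ k.toNat) := by
  rw [← Int.toNat_of_nonneg hk, zpow_natCast, map_pow, algebraMap_X_sub_C, Int.toNat_natCast]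

lemma X_sub_C_zpow_eq_div (α : K) (k : ℤ) :
    (RatFunc.X - RatFunc.C α) ^ k
      = ofPoly ((X - C α) ^ k.toNat) / ofPoly ((X - C α) ^ (-k).toNat) := by
  rcases le_or_gt 0 k with hk | hk
  · rw [X_sub_C_zpow_of_nonneg hk, show (-k).toNat = 0 by omega, pow_zero, map_one, div_one]
  · rw [show k = -(((-k).toNat : ℕ) : ℤ) by omega, zpow_neg, zpow_natCast, Int.neg_neg,
      show (-((-k).toNat : ℤ)).toNat = 0 by omega, pow_zero, map_one, Int.toNat_natCast,
      map_pow, algebraMap_X_sub_C, one_div]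

lemma regAt_iff {α : K} {f : RatFunc K} :
    regAt α f ↔ ∃ p q : K[X], eval α q ≠ 0 ∧ f = ofPoly p / ofPoly q := by
  refine ⟨fun h => ⟨f.num, f.denom, h, (RatFunc.num_div_denom f).symm⟩, ?_⟩
  rintro ⟨p, q, hq, rfl⟩ hd
  exact hq (IsRoot.dvd hd (RatFunc.denom_div_dvd p q))

lemma regAt_iff_ordGe_zero {α : K} {f : RatFunc K} : regAt α f ↔ ordGe α 0 f := by
  rw [ordGe, neg_zero, zpow_zero, one_mul]

lemma ordGe_iff {α : K} {m : ℤ} {f : RatFunc K} :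
    ordGe α m f ↔ ∃ p q : K[X], eval α q ≠ 0 ∧
      f = (RatFunc.X - RatFunc.C α) ^ m * (ofPoly p / ofPoly q) := by
  simp only [ordGe, regAt_iff, zpow_neg,
    inv_mul_eq_iff_eq_mul₀ (zpow_ne_zero _ (RatFunc.X_sub_C_ne_zero α))]

section

variable {α : K} {m : ℤ} {f g : RatFunc K}

lemma ordGe_zero (α : K) (m : ℤ) : ordGe α m (0 : RatFunc K) :=
  ordGe_iff.mpr ⟨0, 1, by simp, by simp⟩

lemma ordGe.add (hf : ordGe α m f) (hg : ordGe α m g) : ordGe α m (f + g) := by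
  obtain ⟨p, q, hq, rfl⟩ := ordGe_iff.mp hf
  obtain ⟨p', q', hq', rfl⟩ := ordGe_iff.mp hg
  have hq0 : q ≠ 0 := by rintro rfl; simp at hq
  have hq0' : q' ≠ 0 := by rintro rfl; simp at hq'
  refine ordGe_iff.mpr ⟨p * q' + p' * q, q * q', by simp [hq, hq'], ?_⟩
  rw [← mul_add, div_add_div _ _ (RatFunc.algebraMap_ne_zero hq0)
    (RatFunc.algebraMap_ne_zero hq0'), map_add, map_mul, map_mul, map_mul, mul_comm (ofPoly q)]

lemma ordGe.smul (c : K) (hf : ordGe α m f) : ordGe α m (c • f) := by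
  obtain ⟨p, q, hq, rfl⟩ := ordGe_iff.mp hf
  refine ordGe_iff.mpr ⟨C c * p, q, hq, ?_⟩
  rw [RatFunc.smul_eq_C_mul, map_mul, RatFunc.algebraMap_C, mul_div_assoc, mul_left_comm]

lemma ordGe.sub (hf : ordGe α m f) (hg : ordGe α m g) : ordGe α m (f - g) := by
  simpa [sub_eq_add_neg] using hf.add (hg.smul (-1))

lemma ordGe_sum {ι : Type*} {t : Finset ι} {f : ι → RatFunc K} (h : ∀ i ∈ t, ordGe α m (f i)) :
    ordGe α m (∑ i ∈ t, f i) := by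
  classical
  induction t using Finset.induction_on with
  | empty => exact ordGe_zero α m
  | insert i t hi ih =>
    rw [Finset.sum_insert hi]
    exact (h i (t.mem_insert_self i)).add (ih fun j hj => h j (Finset.mem_insert_of_mem hj))

lemma ordGe_algebraMap_mul_zpow {k : ℤ} (hmk : m ≤ k) (w : K[X]) :
    ordGe α m (ofPoly w * (RatFunc.X - RatFunc.C α) ^ k) := by
  refine ordGe_iff.mpr ⟨w * (X - C α) ^ (k - m).toNat, 1, by simp, ?_⟩
  rw [map_one, div_one, map_mul, ← X_sub_C_zpow_of_nonneg (by omega), ← add_sub_cancel m k,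
    zpow_add₀ (RatFunc.X_sub_C_ne_zero α), add_sub_cancel_left]
  ring

lemma ordGe_algebraMap (hm : m ≤ 0) (w : K[X]) : ordGe α m (ofPoly w) := by
  simpa using ordGe_algebraMap_mul_zpow (α := α) hm w

lemma ordGe_zero_of_ne {β : K} (hβ : β ≠ α) (w : K[X]) (k : ℤ) :
    ordGe β 0 (ofPoly w * (RatFunc.X - RatFunc.C α) ^ k) := by
  refine ordGe_iff.mpr ⟨w * (X - C α) ^ k.toNat, (X - C α) ^ (-k).toNat, ?_, ?_⟩
  · rw [eval_pow, eval_sub, eval_X, eval_C]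
    exact pow_ne_zero _ (sub_ne_zero.mpr hβ)
  · rw [zpow_zero, one_mul, X_sub_C_zpow_eq_div, map_mul, mul_div_assoc]

lemma not_ordGe_smul_zpow {k : ℤ} {c : K} (hc : c ≠ 0) :
    ¬ ordGe α (k + 1) (c • (RatFunc.X - RatFunc.C α) ^ k) := by
  intro h
  obtain ⟨p, q, hq, hpq⟩ := ordGe_iff.mp h
  have hq0 : q ≠ 0 := by rintro rfl; simp at hq
  rw [zpow_add₀ (RatFunc.X_sub_C_ne_zero α), zpow_one, RatFunc.smul_eq_C_mul, mul_comm,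
    mul_assoc] at hpq
  have hcq : ofPoly (C c) / ofPoly 1 = ofPoly ((X - C α) * p) / ofPoly q := by
    rw [map_one, div_one, RatFunc.algebraMap_C, map_mul, algebraMap_X_sub_C, mul_div_assoc]
    exact mul_left_cancel₀ (zpow_ne_zero k (RatFunc.X_sub_C_ne_zero α)) hpq
  have := congrArg (eval α) ((algebraMap_div_eq_div_iff one_ne_zero hq0).mp hcq)
  simp [hc, hq] at this

lemma eq_of_ordGe_sub_smul_zpow {t : ℤ} {c d : K}
    (hc : ordGe α (t + 1) (f - c • (RatFunc.X - RatFunc.C α) ^ t))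
    (hd : ordGe α (t + 1) (f - d • (RatFunc.X - RatFunc.C α) ^ t)) : c = d := by
  by_contra hne
  apply not_ordGe_smul_zpow (sub_ne_zero.mpr hne)
  convert hd.sub hc using 1
  rw [sub_smul]
  abel

end

section

variable {m : ℤ} {f g : RatFunc K}

lemma degLe.add (hf : degLe m f) (hg : degLe m g) : degLe m (f + g) := by
  rcases hf with rfl | hf
  · rwa [zero_add]
  rcases hg with rfl | hg
  · rw [add_zero]; exact Or.inr hf
  by_cases hg0 : g = 0
  · rw [hg0, add_zero]; exact Or.inr hf
  by_cases hfg : f + g = 0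
  · exact Or.inl hfg
  exact Or.inr ((RatFunc.intDegree_add_le hg0 hfg).trans (max_le hf hg))

lemma degLe.mono {m' : ℤ} (h : m ≤ m') (hf : degLe m f) : degLe m' f :=
  hf.imp_right (·.trans h)

lemma degLe_algebraMap_iff {Q : K[X]} : degLe m (ofPoly Q) ↔ Q = 0 ∨ (Q.natDegree : ℤ) ≤ m := by
  rw [degLe, RatFunc.intDegree_polynomial, map_eq_zero_iff _ (RatFunc.algebraMap_injective K)]

lemma RatFunc.intDegree_X_zpow (k : ℤ) : (RatFunc.X ^ k : RatFunc K).intDegree = k := by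
  have hnat (n : ℕ) : (RatFunc.X ^ (n : ℤ) : RatFunc K).intDegree = n := by
    rw [zpow_natCast, ← RatFunc.algebraMap_X, ← map_pow, RatFunc.intDegree_polynomial,
      natDegree_X_pow]
  obtain ⟨n, rfl | rfl⟩ := Int.eq_nat_or_neg k
  · exact hnat n
  · rw [zpow_neg, RatFunc.intDegree_inv, hnat]

lemma degLe_smul_X_zpow_iff {c : K} {t : ℤ} :
    degLe m (c • RatFunc.X ^ t : RatFunc K) ↔ c = 0 ∨ t ≤ m := by
  rcases eq_or_ne c 0 with rfl | hc
  · simp [degLe]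
  have hX : (RatFunc.X ^ t : RatFunc K) ≠ 0 := zpow_ne_zero t RatFunc.X_ne_zero
  rw [degLe, RatFunc.smul_eq_C_mul, RatFunc.intDegree_mul (by simpa using hc) hX,
    RatFunc.intDegree_C, zero_add, RatFunc.intDegree_X_zpow]
  simp [hc, hX]

lemma eq_zero_of_forall_regAt [IsAlgClosed K] (h : ∀ β, regAt β f) (hd : degLe (-1) f) :
    f = 0 := by
  refine hd.resolve_right fun hdeg => ?_
  have hdenom : f.denom.degree ≠ 0 := by
    rw [degree_eq_natDegree f.denom_ne_zero]
    rw [RatFunc.intDegree] at hdeg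
    exact_mod_cast (show f.denom.natDegree ≠ 0 by omega)
  obtain ⟨β, hβ⟩ := IsAlgClosed.exists_root f.denom hdenom
  exact h β hβ

end

lemma ratDeriv_div {p q : K[X]} (hq : q ≠ 0) :
    ratDeriv (ofPoly p / ofPoly q)
      = ofPoly (derivative p * q - p * derivative q) / ofPoly (q ^ 2) := by
  set f := ofPoly p / ofPoly q
  have hf : f.num * q = p * f.denom :=
    (algebraMap_div_eq_div_iff f.denom_ne_zero hq).mp (RatFunc.num_div_denom f)
  have hf' := congrArg derivative hf
  rw [derivative_mul, derivative_mul] at hf'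
  rw [ratDeriv, ← map_mul, ← map_mul, ← map_sub,
    algebraMap_div_eq_div_iff (pow_ne_zero 2 f.denom_ne_zero) (pow_ne_zero 2 hq)]
  linear_combination (f.denom * q) * hf' - (derivative f.denom * q + f.denom * derivative q) * hf

lemma ratDeriv_algebraMap (p : K[X]) : ratDeriv (ofPoly p) = ofPoly (derivative p) := by
  simpa using ratDeriv_div (p := p) one_ne_zero

lemma ratDeriv_smul (c : K) (f : RatFunc K) : ratDeriv (c • f) = c • ratDeriv f := by
  conv_lhs => rw [← RatFunc.num_div_denom f, RatFunc.smul_eq_C_mul, ← RatFunc.algebraMap_C,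
    ← mul_div_assoc, ← map_mul, ratDeriv_div f.denom_ne_zero]
  rw [ratDeriv, RatFunc.smul_eq_C_mul, ← RatFunc.algebraMap_C, derivative_C_mul]
  simp only [map_mul, map_sub]
  ring

lemma ratDeriv_X_sub_C_zpow (α : K) (k : ℤ) :
    ratDeriv ((RatFunc.X - RatFunc.C α) ^ k) = (k : K) • (RatFunc.X - RatFunc.C α) ^ (k - 1) := by
  obtain ⟨n, rfl | rfl⟩ := Int.eq_nat_or_neg k
  · rw [X_sub_C_zpow_of_nonneg (Int.natCast_nonneg n), Int.toNat_natCast, ratDeriv_algebraMap,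
      derivative_X_sub_C_pow]
    rcases n with _ | n
    · simp
    · rw [map_mul, map_pow, RatFunc.algebraMap_C, algebraMap_X_sub_C, RatFunc.smul_eq_C_mul,
        Nat.add_sub_cancel, Int.cast_natCast, show ((n + 1 : ℕ) : ℤ) - 1 = n by omega,
        zpow_natCast]
  · have hdiv : (RatFunc.X - RatFunc.C α) ^ (-(n : ℤ)) = ofPoly 1 / ofPoly ((X - C α) ^ n) := by
      rw [zpow_neg, zpow_natCast, map_one, map_pow, algebraMap_X_sub_C, one_div]
    rw [hdiv, ratDeriv_div (pow_ne_zero _ (X_sub_C_ne_zero α)), derivative_one,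
      derivative_X_sub_C_pow, show -(n : ℤ) - 1 = -((n + 1 : ℕ) : ℤ) by push_cast; ring,
      zpow_neg, zpow_natCast, RatFunc.smul_eq_C_mul]
    simp only [map_sub, map_mul, map_pow, map_one, map_zero, RatFunc.algebraMap_C,
      RatFunc.algebraMap_X]
    rcases n with _ | n
    · simp
    · simp only [map_natCast, map_neg, Int.cast_neg, Int.cast_natCast, Nat.add_sub_cancel]
      have hU := RatFunc.X_sub_C_ne_zero α
      generalize RatFunc.X - RatFunc.C α = U at hU ⊢
      field_simp
      ring

lemma iterate_ratDeriv_X_sub_C_zpow (α : K) (k : ℤ) (i : ℕ) :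
    ratDeriv^[i] ((RatFunc.X - RatFunc.C α) ^ k)
      = (descPochhammer K i).eval (k : K) • (RatFunc.X - RatFunc.C α) ^ (k - i) := by
  induction i with
  | zero => simp
  | succ i ih =>
    rw [Function.iterate_succ_apply', ih, ratDeriv_smul, ratDeriv_X_sub_C_zpow, smul_smul,
      descPochhammer_succ_eval]
    push_cast
    ring_nf

lemma applyOp_X_sub_C_zpow (r : ℕ) (p : ℕ → K[X]) (α : K) (k : ℤ) :
    applyOp r p ((RatFunc.X - RatFunc.C α) ^ k)
      = ∑ i ∈ Finset.range (r + 1),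
          (descPochhammer K i).eval (k : K)
            • (ofPoly (p i) * (RatFunc.X - RatFunc.C α) ^ (k - i)) := by
  simp only [applyOp, iterate_ratDeriv_X_sub_C_zpow, mul_smul_comm]

lemma applyOp_algebraMap (r : ℕ) (p : ℕ → K[X]) (q : K[X]) :
    applyOp r p (ofPoly q) = ofPoly (∑ i ∈ Finset.range (r + 1), p i * derivative^[i] q) := by
  have hsemiconj : Function.Semiconj ofPoly derivative ratDeriv :=
    fun q => (ratDeriv_algebraMap q).symm
  simp only [applyOp, map_sum, map_mul, (hsemiconj.iterate_right _).eq]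

noncomputable def indicialPoly (r : ℕ) (c : ℕ → K) : K[X] :=
  ∑ i ∈ Finset.range (r + 1), C (c i) * descPochhammer K i

lemma eval_indicialPoly (r : ℕ) (c : ℕ → K) (x : K) :
    (indicialPoly r c).eval x = ∑ i ∈ Finset.range (r + 1), c i * (descPochhammer K i).eval x := by
  simp [indicialPoly, eval_finsetSum]

lemma indicialPoly_succ (r : ℕ) (c : ℕ → K) :
    indicialPoly (r + 1) c = indicialPoly r c + C (c (r + 1)) * descPochhammer K (r + 1) :=
  Finset.sum_range_succ _ _

lemma natDegree_indicialPoly_le (r : ℕ) (c : ℕ → K) : (indicialPoly r c).natDegree ≤ r :=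
  natDegree_sum_le_of_forall_le _ _ fun i hi =>
    (natDegree_C_mul_le _ _).trans ((descPochhammer_natDegree K i).trans_le
      (Nat.lt_succ_iff.mp (Finset.mem_range.mp hi)))

lemma indicialPoly_ne_zero {r : ℕ} {c : ℕ → K} (h : ∃ i ≤ r, c i ≠ 0) : indicialPoly r c ≠ 0 := by
  induction r with
  | zero =>
    obtain ⟨i, hi, hc⟩ := h
    obtain rfl : i = 0 := Nat.le_zero.mp hi
    simpa [indicialPoly] using hc
  | succ r ih =>
    by_cases hr : c (r + 1) = 0
    · obtain ⟨i, hi, hc⟩ := h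
      have hir : i ≤ r := Nat.le_of_lt_succ (lt_of_le_of_ne hi (by rintro rfl; exact hc hr))
      simpa [indicialPoly_succ, hr] using ih ⟨i, hir, hc⟩
    · have hdeg : (C (c (r + 1)) * descPochhammer K (r + 1)).natDegree = r + 1 := by
        rw [natDegree_C_mul hr, descPochhammer_natDegree]
      have hsum : (indicialPoly (r + 1) c).natDegree = r + 1 := by
        have hlt : (indicialPoly r c).natDegree <
            (C (c (r + 1)) * descPochhammer K (r + 1)).natDegree := by
          rw [hdeg]; exact Nat.lt_succ_of_le (natDegree_indicialPoly_le r c)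
        rw [indicialPoly_succ, natDegree_add_eq_right_of_natDegree_lt hlt, hdeg]
      intro h0
      simp [h0] at hsum

section

variable {r : ℕ} {p : ℕ → K[X]} {α : K} {σ : ℤ}

/-- The contribution of `p i ∂ⁱ` to the leading coefficient at `α` of `M((x - α)^k)`, whose
order there is `k + σ`. -/
noncomputable def localIndicialCoeff (p : ℕ → K[X]) (α : K) (σ : ℤ) (i : ℕ) : K :=
  if (rootMultiplicity α (p i) : ℤ) - i = σ then
    eval α (p i /ₘ (X - C α) ^ rootMultiplicity α (p i)) else 0

lemma algebraMap_mul_X_sub_C_zpow (q : K[X]) (α : K) (k : ℤ) :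
    ofPoly q * (RatFunc.X - RatFunc.C α) ^ k
      = ofPoly (q /ₘ (X - C α) ^ rootMultiplicity α q)
          * (RatFunc.X - RatFunc.C α) ^ (k + rootMultiplicity α q) := by
  conv_lhs => rw [← pow_mul_divByMonic_rootMultiplicity_eq q α]
  rw [map_mul, map_pow, algebraMap_X_sub_C, zpow_add₀ (RatFunc.X_sub_C_ne_zero α), zpow_natCast]
  ring

lemma ordGe_algebraMap_mul_zpow_sub_eval (w : K[X]) (k : ℤ) :
    ordGe α (k + 1) (ofPoly w * (RatFunc.X - RatFunc.C α) ^ k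
      - eval α w • (RatFunc.X - RatFunc.C α) ^ k) := by
  obtain ⟨v, hv⟩ := dvd_iff_isRoot.mpr (show IsRoot (w - C (eval α w)) α by simp)
  have hw : ofPoly w * (RatFunc.X - RatFunc.C α) ^ k - eval α w • (RatFunc.X - RatFunc.C α) ^ k
      = ofPoly v * (RatFunc.X - RatFunc.C α) ^ (k + 1) := by
    rw [zpow_add_one₀ (RatFunc.X_sub_C_ne_zero α), RatFunc.smul_eq_C_mul,
      ← RatFunc.algebraMap_C (eval α w), ← sub_mul, ← map_sub, hv, map_mul, algebraMap_X_sub_C]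
    ring
  rw [hw]
  exact ordGe_algebraMap_mul_zpow le_rfl _

lemma ordGe_applyOp_X_sub_C_zpow_sub
    (hσ : ∀ i ≤ r, p i ≠ 0 → σ ≤ (rootMultiplicity α (p i) : ℤ) - i) (k : ℤ) :
    ordGe α (k + σ + 1) (applyOp r p ((RatFunc.X - RatFunc.C α) ^ k)
      - (indicialPoly r (localIndicialCoeff p α σ)).eval (k : K)
          • (RatFunc.X - RatFunc.C α) ^ (k + σ)) := by
  rw [applyOp_X_sub_C_zpow, eval_indicialPoly, Finset.sum_smul, ← Finset.sum_sub_distrib]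
  refine ordGe_sum fun i hi => ?_
  rcases eq_or_ne (p i) 0 with hp | hp
  · simp [localIndicialCoeff, hp, ordGe_zero]
  have hσi := hσ i (Nat.lt_succ_iff.mp (Finset.mem_range.mp hi)) hp
  rw [algebraMap_mul_X_sub_C_zpow (p i) α, mul_comm (localIndicialCoeff p α σ i), mul_smul,
    ← smul_sub]
  refine ordGe.smul _ ?_
  unfold localIndicialCoeff
  split_ifs with h
  · rw [show k - i + rootMultiplicity α (p i) = k + σ by omega]
    exact ordGe_algebraMap_mul_zpow_sub_eval _ _
  · rw [zero_smul, sub_zero]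
    exact ordGe_algebraMap_mul_zpow (by omega) _

lemma eq_eval_indicialPoly_of_ordGe
    (hσ : ∀ i ≤ r, p i ≠ 0 → σ ≤ (rootMultiplicity α (p i) : ℤ) - i) {k : ℤ} {c : K}
    (h : ordGe α (k + σ + 1) (applyOp r p ((RatFunc.X - RatFunc.C α) ^ k)
      - c • (RatFunc.X - RatFunc.C α) ^ (k + σ))) :
    c = (indicialPoly r (localIndicialCoeff p α σ)).eval (k : K) :=
  eq_of_ordGe_sub_smul_zpow h (ordGe_applyOp_X_sub_C_zpow_sub hσ k)

lemma localIndicialCoeff_ne_zero {i : ℕ} (hp : p i ≠ 0)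
    (hi : σ = (rootMultiplicity α (p i) : ℤ) - i) : localIndicialCoeff p α σ i ≠ 0 := by
  rw [localIndicialCoeff, if_pos hi.symm]
  exact eval_divByMonic_pow_rootMultiplicity_ne_zero α hp

lemma eq_neg_of_isLeast_of_eval_ne_zero
    (hσ : IsLeast {m : ℤ | ∃ i ≤ r, p i ≠ 0 ∧ m = (rootMultiplicity α (p i) : ℤ) - i} σ)
    (hpr : eval α (p r) ≠ 0) : σ = -r := by
  have hpr0 : p r ≠ 0 := by rintro h; simp [h] at hpr
  have hmult : rootMultiplicity α (p r) = 0 := rootMultiplicity_eq_zero hpr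
  obtain ⟨i, hir, -, rfl⟩ := hσ.1
  have := hσ.2 (show -(r : ℤ) ∈ _ from ⟨r, le_rfl, hpr0, by simp [hmult]⟩)
  omega

lemma descPochhammer_eval_neg_ne_zero [CharZero K] (n : ℕ) {s : ℤ} (hs : 0 < s) :
    (descPochhammer K n).eval ((-s : ℤ) : K) ≠ 0 := by
  rw [descPochhammer_eval_eq_prod_range, Finset.prod_ne_zero_iff]
  intro j _
  exact_mod_cast (show -s - j ≠ 0 by omega)

lemma eval_indicialPoly_localIndicialCoeff_ne_zero [CharZero K] (hpr : eval α (p r) ≠ 0)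
    {s : ℤ} (hs : 0 < s) :
    (indicialPoly r (localIndicialCoeff p α (-r))).eval ((-s : ℤ) : K) ≠ 0 := by
  have hpr0 : p r ≠ 0 := by rintro h; simp [h] at hpr
  rw [eval_indicialPoly, Finset.sum_eq_single r]
  · rw [localIndicialCoeff, rootMultiplicity_eq_zero hpr, if_pos (by simp), pow_zero,
      divByMonic_one]
    exact mul_ne_zero hpr (descPochhammer_eval_neg_ne_zero r hs)
  · intro i hi hir
    rw [localIndicialCoeff, if_neg (by have := Finset.mem_range.mp hi; omega), zero_mul]
  · intro h
    exact absurd (Finset.self_mem_range_succ r) h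

end

section

variable {r : ℕ} {p : ℕ → K[X]} {σ : ℤ}

/-- The contribution of `p i ∂ⁱ` to the coefficient of `x ^ (n - σ)` in `M(x ^ n)`, `n ≥ r`. -/
noncomputable def inftyIndicialCoeff (p : ℕ → K[X]) (σ : ℤ) (i : ℕ) : K :=
  if σ ≤ i then (p i).coeff (i - σ).toNat else 0

lemma applyOp_X_zpow_natCast (r : ℕ) (p : ℕ → K[X]) (n : ℕ) :
    applyOp r p (RatFunc.X ^ (n : ℤ))
      = ofPoly (∑ i ∈ Finset.range (r + 1), C (n.descFactorial i : K) * p i * X ^ (n - i)) := by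
  rw [zpow_natCast, ← RatFunc.algebraMap_X, ← map_pow, applyOp_algebraMap]
  simp only [iterate_derivative_X_pow_eq_C_mul, mul_left_comm, mul_assoc]

lemma coeff_applyOp_X_pow {n : ℕ} (hrn : r ≤ n) (hσn : σ ≤ n) :
    (∑ i ∈ Finset.range (r + 1), C (n.descFactorial i : K) * p i * X ^ (n - i)).coeff (n - σ).toNat
      = (indicialPoly r (inftyIndicialCoeff p σ)).eval (n : K) := by
  rw [eval_indicialPoly, finsetSum_coeff]
  refine Finset.sum_congr rfl fun i hi => ?_
  have hin : i ≤ n := (Nat.lt_succ_iff.mp (Finset.mem_range.mp hi)).trans hrn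
  rw [coeff_mul_X_pow', descPochhammer_eval_eq_descFactorial, inftyIndicialCoeff]
  by_cases hσi : σ ≤ i
  · rw [if_pos (by omega), if_pos hσi, coeff_C_mul,
      show (n - σ).toNat - (n - i) = (i - σ).toNat by omega, mul_comm]
  · rw [if_neg (by omega), if_neg hσi, zero_mul]

lemma eq_coeff_of_degLe_sub_smul_X_pow (Q : K[X]) (t : ℕ) {c : K}
    (h : degLe ((t : ℤ) - 1) (ofPoly Q - c • RatFunc.X ^ (t : ℤ))) : c = Q.coeff t := by
  rw [zpow_natCast, RatFunc.smul_eq_C_mul, ← RatFunc.algebraMap_C, ← RatFunc.algebraMap_X,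
    ← map_pow, ← map_mul, ← map_sub, degLe_algebraMap_iff] at h
  have hcoeff : (Q - C c * X ^ t).coeff t = 0 := by
    rcases h with h | h
    · rw [h, coeff_zero]
    · exact coeff_eq_zero_of_natDegree_lt (by omega)
  rw [coeff_sub, coeff_C_mul_X_pow, if_pos rfl, sub_eq_zero] at hcoeff
  exact hcoeff.symm

lemma eq_zero_of_degLe_sub_smul_X_zpow (Q : K[X]) {t : ℤ} (ht : t < 0) {c : K}
    (h : degLe (t - 1) (ofPoly Q - c • RatFunc.X ^ t)) : c = 0 := by
  have hQ : degLe t (ofPoly Q) := by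
    rw [← sub_add_cancel (ofPoly Q) (c • RatFunc.X ^ t)]
    exact (h.mono (by omega)).add (degLe_smul_X_zpow_iff.mpr (Or.inr le_rfl))
  obtain rfl : Q = 0 := (degLe_algebraMap_iff.mp hQ).resolve_right (by omega)
  rw [map_zero, zero_sub, ← neg_smul, degLe_smul_X_zpow_iff] at h
  exact neg_eq_zero.mp (h.resolve_right (by omega))

end

variable (K) in
def partialFractionTerms : Set (RatFunc K) :=
  {g | (∃ s : ℤ, 0 ≤ s ∧ g = RatFunc.X ^ s) ∨
    ∃ (α : K) (s : ℤ), 0 < s ∧ g = (RatFunc.X - RatFunc.C α) ^ (-s)}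

lemma algebraMap_mem_span_partialFractionTerms (q : K[X]) :
    ofPoly q ∈ Submodule.span K (partialFractionTerms K) := by
  induction q using Polynomial.induction_on' with
  | add f g hf hg => rw [map_add]; exact Submodule.add_mem _ hf hg
  | monomial n a =>
    have hmono : ofPoly (monomial n a) = a • RatFunc.X ^ (n : ℤ) := by
      rw [← C_mul_X_pow_eq_monomial, map_mul, map_pow, RatFunc.algebraMap_C, RatFunc.algebraMap_X,
        RatFunc.smul_eq_C_mul, zpow_natCast]
    rw [hmono]
    exact Submodule.smul_mem _ _ (Submodule.subset_span (Or.inl ⟨n, by positivity, rfl⟩))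

lemma exists_div_eq_div_add_smul_zpow {α : K} (n : K[X]) {w : K[X]} (hw : eval α w ≠ 0) (m : ℕ) :
    ∃ (n₁ : K[X]) (c : K), ofPoly n / ofPoly ((X - C α) ^ (m + 1) * w)
      = ofPoly n₁ / ofPoly ((X - C α) ^ m * w)
        + c • (RatFunc.X - RatFunc.C α) ^ (-((m + 1 : ℕ) : ℤ)) := by
  set c := eval α n / eval α w
  obtain ⟨n₁, hn₁⟩ := dvd_iff_isRoot.mpr (show IsRoot (n - C c * w) α by
    simp [c, div_mul_cancel₀ _ hw])
  have hN : ofPoly n = RatFunc.C c * ofPoly w + (RatFunc.X - RatFunc.C α) * ofPoly n₁ := by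
    rw [← algebraMap_X_sub_C, ← map_mul, ← hn₁, ← RatFunc.algebraMap_C, ← map_mul, ← map_add,
      add_sub_cancel]
  have hW : ofPoly w ≠ 0 := RatFunc.algebraMap_ne_zero (by rintro rfl; simp at hw)
  refine ⟨n₁, c, ?_⟩
  rw [map_mul, map_pow, map_mul, map_pow, algebraMap_X_sub_C, hN, zpow_neg, zpow_natCast,
    RatFunc.smul_eq_C_mul]
  have hU := RatFunc.X_sub_C_ne_zero α
  generalize RatFunc.X - RatFunc.C α = U at hU ⊢
  field_simp
  ring

lemma mem_span_partialFractionTerms [IsAlgClosed K] (f : RatFunc K) :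
    f ∈ Submodule.span K (partialFractionTerms K) := by
  rw [← RatFunc.num_div_denom f]
  generalize f.num = n, f.denom = d
  induction hN : d.natDegree using Nat.strong_induction_on generalizing n d with
  | _ N ih =>
  rcases eq_or_ne d 0 with rfl | hd
  · simp
  by_cases hdeg : d.natDegree = 0
  · rw [eq_C_of_natDegree_eq_zero hdeg, RatFunc.algebraMap_C, div_eq_mul_inv, ← map_inv₀,
      mul_comm, ← RatFunc.smul_eq_C_mul]
    exact Submodule.smul_mem _ _ (algebraMap_mem_span_partialFractionTerms n)
  obtain ⟨α, hα⟩ := IsAlgClosed.exists_root d (by rwa [degree_eq_natDegree hd, Nat.cast_ne_zero])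
  obtain ⟨m, hm⟩ : ∃ m, rootMultiplicity α d = m + 1 :=
    Nat.exists_eq_add_one.mpr ((rootMultiplicity_pos hd).mpr hα)
  have hfactor := pow_mul_divByMonic_rootMultiplicity_eq d α
  have hw := eval_divByMonic_pow_rootMultiplicity_ne_zero α hd
  rw [hm] at hfactor hw
  set w := d /ₘ (X - C α) ^ (m + 1)
  have hw0 : w ≠ 0 := by rintro h; simp [h] at hw
  obtain ⟨n₁, c, hsplit⟩ := exists_div_eq_div_add_smul_zpow n hw m
  rw [← hfactor, hsplit]
  refine Submodule.add_mem _ (ih _ ?_ n₁ _ rfl) (Submodule.smul_mem _ _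
    (Submodule.subset_span (Or.inr ⟨α, (m + 1 : ℕ), by positivity, rfl⟩)))
  rw [← hN, ← hfactor, natDegree_mul (pow_ne_zero _ (X_sub_C_ne_zero α)) hw0,
    natDegree_mul (pow_ne_zero _ (X_sub_C_ne_zero α)) hw0, natDegree_pow, natDegree_pow,
    natDegree_X_sub_C]
  omega

section

variable {r : ℕ} {p : ℕ → K[X]}

def IsLocalIndicial (r : ℕ) (p : ℕ → K[X]) (σα : K → ℤ) (indα : K → ℤ → K) : Prop :=
  ∀ (α : K) (s : ℤ), ordGe α (-s + σα α + 1)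
    (applyOp r p ((RatFunc.X - RatFunc.C α) ^ (-s)) -
      indα α (-s) • (RatFunc.X - RatFunc.C α) ^ (-s + σα α))

def IsInftyIndicial (r : ℕ) (p : ℕ → K[X]) (σinf : ℤ) (indinf : ℤ → K) : Prop :=
  ∀ s : ℤ, degLe (s - σinf - 1) (applyOp r p (RatFunc.X ^ s) - indinf (-s) • RatFunc.X ^ (s - σinf))

lemma ordGe_applyOp_X_sub_C_zpow_of_ne (r : ℕ) (p : ℕ → K[X]) {α β : K} (hβ : β ≠ α) (k : ℤ) :
    ordGe β 0 (applyOp r p ((RatFunc.X - RatFunc.C α) ^ k)) := by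
  rw [applyOp_X_sub_C_zpow]
  exact ordGe_sum fun i _ => (ordGe_zero_of_ne hβ _ _).smul _

namespace IsLocalIndicial

variable {σα : K → ℤ} {indα : K → ℤ → K}

lemma eq_eval (hind : IsLocalIndicial r p σα indα) {α : K}
    (hσ : ∀ i ≤ r, p i ≠ 0 → σα α ≤ (rootMultiplicity α (p i) : ℤ) - i) (s : ℤ) :
    indα α (-s) = (indicialPoly r (localIndicialCoeff p α (σα α))).eval ((-s : ℤ) : K) :=
  eq_eval_indicialPoly_of_ordGe hσ (hind α s)

lemma ne_zero_of_eval_ne_zero [CharZero K] (hind : IsLocalIndicial r p σα indα) {α : K}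
    (hσ : IsLeast {m : ℤ | ∃ i ≤ r, p i ≠ 0 ∧ m = (rootMultiplicity α (p i) : ℤ) - i} (σα α))
    (hpr : eval α (p r) ≠ 0) {s : ℤ} (hs : 0 < s) : indα α (-s) ≠ 0 := by
  rw [hind.eq_eval (fun i hi hp => hσ.2 ⟨i, hi, hp, rfl⟩),
    eq_neg_of_isLeast_of_eval_ne_zero hσ hpr]
  exact eval_indicialPoly_localIndicialCoeff_ne_zero hpr hs

lemma finite_setOf_eq_zero [CharZero K] (hind : IsLocalIndicial r p σα indα) {α : K}
    (hσ : IsLeast {m : ℤ | ∃ i ≤ r, p i ≠ 0 ∧ m = (rootMultiplicity α (p i) : ℤ) - i} (σα α)) :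
    {s : ℤ | indα α (-s) = 0}.Finite := by
  obtain ⟨i, hi, hp, hσi⟩ := hσ.1
  have hne := indicialPoly_ne_zero ⟨i, hi, localIndicialCoeff_ne_zero hp hσi⟩
  refine ((finite_setOfPred_isRoot hne).preimage (f := fun s : ℤ => ((-s : ℤ) : K))
    fun a _ b _ h => neg_injective (Int.cast_injective h)).subset fun s hs => ?_
  rw [Set.mem_ofPred_eq, hind.eq_eval (fun i hi hp => hσ.2 ⟨i, hi, hp, rfl⟩)] at hs
  exact hs

end IsLocalIndicial

namespace IsInftyIndicial

variable {σinf : ℤ} {indinf : ℤ → K}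

lemma eq_eval (hind : IsInftyIndicial r p σinf indinf) {n : ℕ} (hrn : r ≤ n) (hσn : σinf ≤ n) :
    indinf (-n) = (indicialPoly r (inftyIndicialCoeff p σinf)).eval (n : K) := by
  have h := hind n
  rw [applyOp_X_zpow_natCast, ← Int.toNat_of_nonneg (sub_nonneg.mpr hσn)] at h
  rw [eq_coeff_of_degLe_sub_smul_X_pow _ _ h, coeff_applyOp_X_pow hrn hσn]

lemma eq_zero_of_lt (hind : IsInftyIndicial r p σinf indinf) {n : ℕ} (hn : (n : ℤ) < σinf) :
    indinf (-n) = 0 := by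
  have h := hind n
  rw [applyOp_X_zpow_natCast] at h
  exact eq_zero_of_degLe_sub_smul_X_zpow _ (by omega) h

lemma finite_setOf_eq_zero [CharZero K] (hind : IsInftyIndicial r p σinf indinf)
    (hσ : ∃ i ≤ r, p i ≠ 0 ∧ σinf = (i : ℤ) - (p i).natDegree) :
    {s : ℤ | 0 ≤ s ∧ indinf (-s) = 0}.Finite := by
  obtain ⟨i, hi, hp, hσi⟩ := hσ
  have hc : inftyIndicialCoeff p σinf i ≠ 0 := by
    rw [inftyIndicialCoeff, if_pos (by omega), show ((i : ℤ) - σinf).toNat = (p i).natDegree by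
      omega]
    exact mt leadingCoeff_eq_zero.mp hp
  have hne := indicialPoly_ne_zero ⟨i, hi, hc⟩
  refine ((Set.finite_Icc 0 (max (r : ℤ) σinf)).union ((finite_setOfPred_isRoot hne).preimage
    (Int.cast_injective.injOn))).subset ?_
  rintro s ⟨hs, hs0⟩
  lift s to ℕ using hs
  by_cases hsmall : (s : ℤ) ≤ max (r : ℤ) σinf
  · exact Or.inl ⟨Int.natCast_nonneg s, hsmall⟩
  · right
    rw [Set.mem_preimage, Int.cast_natCast, Set.mem_ofPred_eq, IsRoot.def,
      ← hind.eq_eval (n := s) (by omega) (by omega)]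
    exact hs0

end IsInftyIndicial

end

section

variable {r : ℕ} {p : ℕ → K[X]}
  {H Hinf : RatFunc K → RatFunc K} {Hloc : K → RatFunc K → RatFunc K}

def IsLocalReductionStep (r : ℕ) (p : ℕ → K[X]) (σα : K → ℤ) (indα : K → ℤ → K)
    (Hloc : K → RatFunc K → RatFunc K) : Prop :=
  ∀ (α : K) (R : RatFunc K) (c : K) (s : ℤ), 0 < s → c ≠ 0 →
    ordGe α (-s + 1) (R - c • (RatFunc.X - RatFunc.C α) ^ (-s)) → indα α (-σα α - s) ≠ 0 →
    Hloc α R = Hloc α (R - (c / indα α (-σα α - s)) •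
      applyOp r p ((RatFunc.X - RatFunc.C α) ^ (-s - σα α)))

def IsInftyReductionStep (r : ℕ) (p : ℕ → K[X]) (σinf : ℤ) (indinf : ℤ → K)
    (Hinf : RatFunc K → RatFunc K) : Prop :=
  ∀ (R : RatFunc K) (c : K) (s : ℤ), 0 ≤ s → c ≠ 0 → degLe (s - 1) (R - c • RatFunc.X ^ s) →
    indinf (-s - σinf) ≠ 0 → 0 ≤ s + σinf →
    Hinf R = Hinf (R - (c / indinf (-s - σinf)) • applyOp r p (RatFunc.X ^ (s + σinf)))

def IsPartialFractionReduction (H Hinf : RatFunc K → RatFunc K)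
    (Hloc : K → RatFunc K → RatFunc K) : Prop :=
  ∀ R : RatFunc K, ∃ (S : Finset K) (pol : K → RatFunc K) (pinf : RatFunc K),
    (∃ q : K[X], pinf = ofPoly q) ∧
    (∀ α ∈ S, degLe (-1) (pol α) ∧ ∀ β : K, β ≠ α → ordGe β 0 (pol α)) ∧
    R = pinf + ∑ α ∈ S, pol α ∧
    H R = Hinf (pinf + ∑ α ∈ S, Hloc α (pol α))

lemma IsPartialFractionReduction.exists_eq_of_ordGe_zero_of_ne [IsAlgClosed K]
    (hH : IsPartialFractionReduction H Hinf Hloc) (hHloc : ∀ α, Hloc α 0 = 0) {R : RatFunc K}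
    {α : K} (hR : ∀ β, β ≠ α → ordGe β 0 R) :
    ∃ (q : K[X]) (T : RatFunc K),
      R = ofPoly q + T ∧ degLe (-1) T ∧ H R = Hinf (ofPoly q + Hloc α T) := by
  classical
  obtain ⟨S, pol, _, ⟨q, rfl⟩, hpol, hRq, hHR⟩ := hH R
  have hzero : ∀ β ∈ S, β ≠ α → pol β = 0 := by
    intro β hβ hβα
    refine eq_zero_of_forall_regAt (fun γ => ?_) (hpol β hβ).1
    rw [regAt_iff_ordGe_zero]
    rcases eq_or_ne γ β with rfl | hγ
    · have hsplit : pol γ = R - ofPoly q - ∑ δ ∈ S.erase γ, pol δ := by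
        rw [hRq, ← Finset.add_sum_erase S pol hβ]
        ring
      rw [hsplit]
      exact ((hR γ hβα).sub (ordGe_algebraMap le_rfl q)).sub (ordGe_sum fun δ hδ =>
        (hpol δ (Finset.mem_of_mem_erase hδ)).2 γ (Finset.ne_of_mem_erase hδ).symm)
    · exact (hpol β hβ).2 γ hγ
  by_cases hα : α ∈ S
  · refine ⟨q, pol α, ?_, (hpol α hα).1, ?_⟩
    · rw [hRq, Finset.sum_eq_single_of_mem α hα hzero]
    · rw [hHR, Finset.sum_eq_single_of_mem α hα fun β hβ hne => by rw [hzero β hβ hne, hHloc]]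
  · have hzero' : ∀ β ∈ S, pol β = 0 := fun β hβ => hzero β hβ (ne_of_mem_of_not_mem hβ hα)
    refine ⟨q, 0, ?_, Or.inl rfl, ?_⟩
    · rw [hRq, Finset.sum_eq_zero hzero', add_zero]
    · rw [hHR, hHloc, Finset.sum_eq_zero fun β hβ => by rw [hzero' β hβ, hHloc]]

lemma IsPartialFractionReduction.apply_algebraMap [IsAlgClosed K]
    (hH : IsPartialFractionReduction H Hinf Hloc) (hHloc : ∀ α, Hloc α 0 = 0) (Q : K[X]) :
    H (ofPoly Q) = Hinf (ofPoly Q) := by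
  obtain ⟨q, T, hQ, hT, hHQ⟩ :=
    hH.exists_eq_of_ordGe_zero_of_ne hHloc (α := 0) fun β _ => ordGe_algebraMap le_rfl Q
  obtain rfl : T = 0 := by
    rw [eq_sub_of_add_eq' hQ.symm, ← map_sub, degLe_algebraMap_iff] at hT
    rw [eq_sub_of_add_eq' hQ.symm, ← map_sub, hT.resolve_right (by omega), map_zero]
  rw [hHQ, hHloc, hQ, add_zero]

variable {σα : K → ℤ} {indα : K → ℤ → K} {σinf : ℤ} {indinf : ℤ → K}

lemma H_applyOp_X_sub_C_zpow_eq_zero [IsAlgClosed K]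
    (hH : IsPartialFractionReduction H Hinf Hloc)
    (hHloc : ∀ (α : K) (R : RatFunc K), ordGe α 0 R → Hloc α R = R) (hHinf : Hinf 0 = 0)
    (hstep : IsLocalReductionStep r p σα indα Hloc) (hind : IsLocalIndicial r p σα indα)
    {α : K} {s : ℤ} (hσs : σα α < s) (hind0 : indα α (-s) ≠ 0) :
    H (applyOp r p ((RatFunc.X - RatFunc.C α) ^ (-s))) = 0 := by
  obtain ⟨q, T, hRT, -, hHR⟩ := hH.exists_eq_of_ordGe_zero_of_ne
    (fun γ => hHloc γ 0 (ordGe_zero γ 0)) fun β hβ => ordGe_applyOp_X_sub_C_zpow_of_ne r p hβ (-s)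
  obtain rfl := eq_sub_of_add_eq' hRT.symm
  have hlead : ordGe α (-(s - σα α) + 1) (applyOp r p ((RatFunc.X - RatFunc.C α) ^ (-s))
      - ofPoly q - indα α (-s) • (RatFunc.X - RatFunc.C α) ^ (-(s - σα α))) := by
    rw [sub_right_comm, show -(s - σα α) = -s + σα α by ring]
    exact (hind α s).sub (ordGe_algebraMap (by omega) q)
  have hred := hstep α _ (indα α (-s)) (s - σα α) (by omega) hind0 hlead
    (by rwa [show -σα α - (s - σα α) = -s by ring])
  rw [show -σα α - (s - σα α) = -s by ring, show -(s - σα α) - σα α = -s by ring, div_self hind0,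
    one_smul, sub_sub_cancel_left, ← map_neg, hHloc α _ (ordGe_algebraMap le_rfl _),
    map_neg] at hred
  rw [hHR, hred, add_neg_cancel, hHinf]

lemma H_applyOp_X_zpow_eq_zero [IsAlgClosed K] (hH : IsPartialFractionReduction H Hinf Hloc)
    (hHloc : ∀ α, Hloc α 0 = 0) (hHinf : Hinf 0 = 0)
    (hstep : IsInftyReductionStep r p σinf indinf Hinf) (hind : IsInftyIndicial r p σinf indinf)
    {s : ℤ} (hs : 0 ≤ s) (hind0 : indinf (-s) ≠ 0) :
    H (applyOp r p (RatFunc.X ^ s)) = 0 := by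
  lift s to ℕ using hs with n
  have hσn : σinf ≤ n := le_of_not_gt fun h => hind0 (hind.eq_zero_of_lt h)
  have hred := hstep _ (indinf (-n)) (n - σinf) (by omega) hind0 (hind n)
    (by rwa [show -((n : ℤ) - σinf) - σinf = -n by ring]) (by omega)
  rw [show -((n : ℤ) - σinf) - σinf = -n by ring, show (n : ℤ) - σinf + σinf = n by ring,
    div_self hind0, one_smul, sub_self, hHinf] at hred
  rw [applyOp_X_zpow_natCast, hH.apply_algebraMap hHloc, ← applyOp_X_zpow_natCast, hred]

end

section

variable {r : ℕ} {p : ℕ → K[X]} {σα : K → ℤ} {indα : K → ℤ → K}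
  {σinf : ℤ} {indinf : ℤ → K} {H Hinf : RatFunc K → RatFunc K}
  {Hloc : K → RatFunc K → RatFunc K}

def exceptionalGenerators (r : ℕ) (p : ℕ → K[X]) (σα : K → ℤ) (indα : K → ℤ → K)
    (indinf : ℤ → K) (H : RatFunc K → RatFunc K) : Set (RatFunc K) :=
  {f : RatFunc K |
    (∃ (α : K) (s : ℤ), Polynomial.eval α (p r) = 0 ∧ 0 < s ∧ indα α (-s) = 0 ∧
      f = H (applyOp r p ((RatFunc.X - RatFunc.C α) ^ (-s)))) ∨
    (∃ (α : K) (s : ℤ), Polynomial.eval α (p r) = 0 ∧ 0 < s ∧ s ≤ σα α ∧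
      f = H (applyOp r p ((RatFunc.X - RatFunc.C α) ^ (-s)))) ∨
    (∃ s : ℤ, 0 ≤ s ∧ indinf (-s) = 0 ∧ f = H (applyOp r p (RatFunc.X ^ s)))}

lemma finite_exceptionalGenerators [CharZero K] (hpr : p r ≠ 0)
    (hσα : ∀ α : K, IsLeast {m : ℤ | ∃ i ≤ r, p i ≠ 0 ∧
      m = (rootMultiplicity α (p i) : ℤ) - i} (σα α))
    (hσinf : ∃ i ≤ r, p i ≠ 0 ∧ σinf = (i : ℤ) - (p i).natDegree)
    (hindα : IsLocalIndicial r p σα indα) (hindinf : IsInftyIndicial r p σinf indinf) :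
    (exceptionalGenerators r p σα indα indinf H).Finite := by
  have hroots := finite_setOfPred_isRoot hpr
  refine Set.Finite.union ?_ (Set.Finite.union ?_ ?_)
  · refine (hroots.biUnion fun α _ => ((hindα.finite_setOf_eq_zero (hσα α)).image
      fun s => H (applyOp r p ((RatFunc.X - RatFunc.C α) ^ (-s))))).subset ?_
    rintro _ ⟨α, s, hα, -, hs, rfl⟩
    exact Set.mem_biUnion hα ⟨s, hs, rfl⟩
  · refine (hroots.biUnion fun α _ => ((Set.finite_Icc 1 (σα α)).image
      fun s => H (applyOp r p ((RatFunc.X - RatFunc.C α) ^ (-s))))).subset ?_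
    rintro _ ⟨α, s, hα, hs, hsσ, rfl⟩
    exact Set.mem_biUnion hα ⟨s, ⟨hs, hsσ⟩, rfl⟩
  · refine ((hindinf.finite_setOf_eq_zero hσinf).image
      fun s => H (applyOp r p (RatFunc.X ^ s))).subset ?_
    rintro _ ⟨s, hs, hs0, rfl⟩
    exact ⟨s, ⟨hs, hs0⟩, rfl⟩

lemma apply_mem_span_exceptionalGenerators [CharZero K] [IsAlgClosed K]
    {H M : RatFunc K →ₗ[K] RatFunc K} (hM : ∀ f, M f = applyOp r p f)
    (hσα : ∀ α : K, IsLeast {m : ℤ | ∃ i ≤ r, p i ≠ 0 ∧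
      m = (rootMultiplicity α (p i) : ℤ) - i} (σα α))
    (hindα : IsLocalIndicial r p σα indα) (hindinf : IsInftyIndicial r p σinf indinf)
    (hH : IsPartialFractionReduction H Hinf Hloc)
    (hHloc : ∀ (α : K) (R : RatFunc K), ordGe α 0 R → Hloc α R = R) (hHinf : Hinf 0 = 0)
    (hloc : IsLocalReductionStep r p σα indα Hloc)
    (hinf : IsInftyReductionStep r p σinf indinf Hinf)
    (g : RatFunc K) :
    H (M g) ∈ Submodule.span K (exceptionalGenerators r p σα indα indinf H) := by
  refine Submodule.span_induction ?_ (by simp) (fun x y _ _ hx hy => by simpa using add_mem hx hy)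
    (fun a x _ hx => by simpa using Submodule.smul_mem _ a hx) (mem_span_partialFractionTerms g)
  rintro _ (⟨s, hs, rfl⟩ | ⟨α, s, hs, rfl⟩) <;> rw [hM]
  · by_cases hind0 : indinf (-s) = 0
    · exact Submodule.subset_span (Or.inr (Or.inr ⟨s, hs, hind0, rfl⟩))
    rw [H_applyOp_X_zpow_eq_zero hH (fun α => hHloc α 0 (ordGe_zero α 0)) hHinf hinf hindinf hs
      hind0]
    exact zero_mem _
  · by_cases hgen : eval α (p r) = 0 ∧ (indα α (-s) = 0 ∨ s ≤ σα α)
    · obtain ⟨hα, hind0 | hsσ⟩ := hgen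
      · exact Submodule.subset_span (Or.inl ⟨α, s, hα, hs, hind0, rfl⟩)
      · exact Submodule.subset_span (Or.inr (Or.inl ⟨α, s, hα, hs, hsσ, rfl⟩))
    have hreduced : indα α (-s) ≠ 0 ∧ σα α < s := by
      by_cases hα : eval α (p r) = 0
      · exact ⟨fun h => hgen ⟨hα, Or.inl h⟩, lt_of_not_ge fun h => hgen ⟨hα, Or.inr h⟩⟩
      · refine ⟨hindα.ne_zero_of_eval_ne_zero (hσα α) hα hs, ?_⟩
        rw [eq_neg_of_isLeast_of_eval_ne_zero (hσα α) hα]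
        omega
    rw [H_applyOp_X_sub_C_zpow_eq_zero hH hHloc hHinf hloc hindα hreduced.2 hreduced.1]
    exact zero_mem _

end

end

/-- over an algebraically closed field, the exceptional space
`Exc_M = H(M(K(x)))` is spanned by the finite family
(a) `H(M((x−α)^{−s}))`, `α` a zero of the leading coefficient, `s > 0`, `ind_α(−s) = 0`;
(b) `H(M((x−α)^{−s}))`, `α` a zero of the leading coefficient, `0 < s ≤ σ_α`;
(c) `H(M(x^s))`, `s ≥ 0`, `ind_∞(−s) = 0`;
in particular it is finite dimensional. -/
theorem exceptional_space_spanned {K : Type*} [Field K] [CharZero K]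
    [IsAlgClosed K]
    (M H : RatFunc K →ₗ[K] RatFunc K)
    (r : ℕ) (p : ℕ → K[X]) (hpr : p r ≠ 0)
    (σα : K → ℤ) (σinf : ℤ) (indα : K → ℤ → K) (indinf : ℤ → K)
    -- the shifts of `M` at finite points and at infinity:
    (hσα : ∀ α : K, IsLeast {m : ℤ | ∃ i ≤ r, p i ≠ 0 ∧
        m = (Polynomial.rootMultiplicity α (p i) : ℤ) - i} (σα α))
    (hσinf : IsGreatest {m : ℤ | ∃ i ≤ r, p i ≠ 0 ∧ m = (i : ℤ) - (p i).natDegree} σinf)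
    -- the defining property of the indicial functions:
    -- `M((x−α)^{−s}) = ind_α(−s)(x−α)^{−s+σ_α}(1+o(1))` at `α`,
    (hindα : ∀ (α : K) (s : ℤ),
      ordGe α (-s + σα α + 1)
        (applyOp r p ((RatFunc.X - RatFunc.C α) ^ (-s)) -
          indα α (-s) • (RatFunc.X - RatFunc.C α) ^ (-s + σα α)))
    -- `M(x^s) = ind_∞(−s) x^{s−σ_∞}(1+o(1))` at infinity:
    (hindinf : ∀ s : ℤ,
      degLe (s - σinf - 1)
        (applyOp r p (RatFunc.X ^ s) - indinf (-s) • RatFunc.X ^ (s - σinf)))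
    (Hloc : K → RatFunc K → RatFunc K) (Hinf : RatFunc K → RatFunc K)
    -- the recursive definition of the local reduction `H_α`:
    (hHloc0 : ∀ (α : K) (R : RatFunc K), ordGe α 0 R → Hloc α R = R)
    (hHloc1 : ∀ (α : K) (R : RatFunc K) (c : K) (s : ℤ), 0 < s → c ≠ 0 →
      ordGe α (-s + 1) (R - c • (RatFunc.X - RatFunc.C α) ^ (-s)) →
      (indα α (-σα α - s) ≠ 0 →
        Hloc α R = Hloc α (R - (c / indα α (-σα α - s)) •
          applyOp r p ((RatFunc.X - RatFunc.C α) ^ (-s - σα α)))) ∧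
      (indα α (-σα α - s) = 0 →
        Hloc α R = c • (RatFunc.X - RatFunc.C α) ^ (-s) +
          Hloc α (R - c • (RatFunc.X - RatFunc.C α) ^ (-s))))
    -- the recursive definition of the reduction `H_∞` at infinity:
    (hHinf0 : ∀ R : RatFunc K, degLe (-1) R → Hinf R = R)
    (hHinf1 : ∀ (R : RatFunc K) (c : K) (s : ℤ), 0 ≤ s → c ≠ 0 →
      degLe (s - 1) (R - c • RatFunc.X ^ s) →
      ((indinf (-s - σinf) ≠ 0 ∧ 0 ≤ s + σinf) →
        Hinf R = Hinf (R - (c / indinf (-s - σinf)) • applyOp r p (RatFunc.X ^ (s + σinf)))) ∧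
      (¬ (indinf (-s - σinf) ≠ 0 ∧ 0 ≤ s + σinf) →
        Hinf R = c • RatFunc.X ^ s + Hinf (R - c • RatFunc.X ^ s)))
    -- `H(R) = H_∞(R_{(∞)} + ∑_α H_α(R_{(α)}))` via partial fractions:
    (hH : ∀ R : RatFunc K, ∃ (S : Finset K) (pol : K → RatFunc K) (pinf : RatFunc K),
      (∃ q : K[X], pinf = algebraMap K[X] (RatFunc K) q) ∧
      (∀ α ∈ S, degLe (-1) (pol α) ∧ ∀ β : K, β ≠ α → ordGe β 0 (pol α)) ∧
      R = pinf + ∑ α ∈ S, pol α ∧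
      H R = Hinf (pinf + ∑ α ∈ S, Hloc α (pol α)))
     (hM : ∀ f, M f = applyOp r p f) :
    Submodule.map H (LinearMap.range M) =
      Submodule.span K
        {f : RatFunc K |
          (∃ (α : K) (s : ℤ), Polynomial.eval α (p r) = 0 ∧ 0 < s ∧ indα α (-s) = 0 ∧
            f = H (applyOp r p ((RatFunc.X - RatFunc.C α) ^ (-s)))) ∨
          (∃ (α : K) (s : ℤ), Polynomial.eval α (p r) = 0 ∧ 0 < s ∧ s ≤ σα α ∧
            f = H (applyOp r p ((RatFunc.X - RatFunc.C α) ^ (-s)))) ∨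
          (∃ s : ℤ, 0 ≤ s ∧ indinf (-s) = 0 ∧ f = H (applyOp r p (RatFunc.X ^ s)))} ∧
    FiniteDimensional K (Submodule.map H (LinearMap.range M)) := by
  have hHinf : Hinf 0 = 0 := hHinf0 0 (Or.inl rfl)
  have hspan : Submodule.map H (LinearMap.range M) =
      Submodule.span K (exceptionalGenerators r p σα indα indinf H) := by
    refine le_antisymm ?_ (Submodule.span_le.mpr ?_)
    · rintro _ ⟨_, ⟨g, rfl⟩, rfl⟩
      exact apply_mem_span_exceptionalGenerators hM hσα hindα hindinf hH hHloc0 hHinf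
        (fun α R c s hs hc hR => (hHloc1 α R c s hs hc hR).1)
        (fun R c s hs hc hR hind hσ => (hHinf1 R c s hs hc hR).1 ⟨hind, hσ⟩) g
    · rintro _ (⟨α, s, -, -, -, rfl⟩ | ⟨α, s, -, -, -, rfl⟩ | ⟨s, -, -, rfl⟩) <;>
        exact ⟨_, ⟨_, hM _⟩, rfl⟩
  refine ⟨hspan, hspan ▸ FiniteDimensional.span_of_finite K ?_⟩
  exact finite_exceptionalGenerators hpr hσα hσinf.1 hindα hindinf
end

section
/- Let K be a field of characteristic zero, M a linear differential operator with polynomial coefficients, H the weak Hermite reduction with respect to M, Exc_M = H(M(K(x))), and ρ the idempotent projection annihilating exactly Exc_M with minimal-degree-numerator normalization. Then the map [·] : K(x) → K(x) defined by [R] = ρ(H(R)) is a canonical form with respect to M: it is K-linear, [M(R)] = 0 for all R, and R − [R] ∈ M(K(x)) for all R. In particular [R] = 0 if and only if R ∈ M(K(x)), and [[R]] = [R]. -/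
/-!
`H` maps `im M` into `Exc = ker ρ`, and `Exc ⊆ im M` because `H` only moves elements by
elements of `im M`. Hence `ρ ∘ H` kills `im M`, and `R ↦ ρ (H R)` moves `R` only by elements of
`im M` (first by `H`, then by `ρ`, whose idempotency puts `x - ρ x` in `ker ρ`). Everything else
follows from these two facts.
-/

open Polynomial

namespace LinearMap

variable {R V : Type*} [Ring R] [AddCommGroup V] [Module R V] {M H ρ : V →ₗ[R] V}

theorem map_range_le_range_of_sub_mem_range (hH : ∀ v, v - H v ∈ range M) :
    (range M).map H ≤ range M := by
  rintro _ ⟨_, ⟨u, rfl⟩, rfl⟩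
  simpa using (range M).sub_mem (mem_range_self M u) (hH (M u))

theorem sub_mem_ker_of_idempotent (hρ : ∀ v, ρ (ρ v) = ρ v) (v : V) : v - ρ v ∈ ker ρ := by
  rw [mem_ker, map_sub, hρ, sub_self]

theorem range_le_ker_comp (hker : (range M).map H ≤ ker ρ) : range M ≤ ker (ρ ∘ₗ H) := by
  rwa [ker_comp, ← Submodule.map_le_iff_le_comap]

theorem comp_apply_eq_of_sub_mem_range (hker : (range M).map H ≤ ker ρ) {v w : V}
    (hvw : v - w ∈ range M) : ρ (H v) = ρ (H w) := by
  rw [← sub_eq_zero, ← map_sub, ← map_sub]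
  exact range_le_ker_comp hker hvw

theorem sub_comp_apply_mem_range (hH : ∀ v, v - H v ∈ range M)
    (hρ : ∀ v, ρ (ρ v) = ρ v) (hker : ker ρ ≤ (range M).map H) (v : V) :
    v - ρ (H v) ∈ range M := by
  have hHv : H v - ρ (H v) ∈ range M :=
    map_range_le_range_of_sub_mem_range hH (hker (sub_mem_ker_of_idempotent hρ (H v)))
  simpa using (range M).add_mem (hH v) hHv

end LinearMap

open LinearMap in
theorem generalized_hermite_is_canonical_form_general {K : Type*} [Field K]
    (M H ρ : RatFunc K →ₗ[K] RatFunc K)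
    (hH1 : ∀ R : RatFunc K, R - H R ∈ LinearMap.range M)
    (Exc : Submodule K (RatFunc K))
    (hExc : Exc = Submodule.map H (LinearMap.range M))
    (hρ1 : ∀ R : RatFunc K, ρ (ρ R) = ρ R)
    (hρ2 : LinearMap.ker ρ = Exc) :
    (∀ R : RatFunc K, ρ (H (M R)) = 0) ∧
    (∀ R : RatFunc K, R - ρ (H R) ∈ LinearMap.range M) ∧
    (∀ R : RatFunc K, ρ (H R) = 0 ↔ R ∈ LinearMap.range M) ∧
    (∀ R : RatFunc K, ρ (H (ρ (H R))) = ρ (H R)) := by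
  have hker : ker ρ = (range M).map H := hρ2.trans hExc
  have hannihilates : range M ≤ ker (ρ ∘ₗ H) := range_le_ker_comp hker.ge
  have hreduces := sub_comp_apply_mem_range hH1 hρ1 hker.le
  refine ⟨fun R => hannihilates (mem_range_self M R), hreduces,
    fun R => ⟨fun h => by simpa [h] using hreduces R, fun h => hannihilates h⟩, fun R =>
    comp_apply_eq_of_sub_mem_range hker.ge (by simpa using (range M).neg_mem (hreduces R))⟩

/-- the generalized Hermite reduction `[R] = ρ(H(R))` is a canonical
form with respect to `M`: it annihilates the image of `M`, reduces every `R` modulo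
the image of `M`, vanishes exactly on the image of `M`, and is idempotent. -/
theorem generalized_hermite_is_canonical_form {K : Type*} [Field K] [CharZero K]
    (r : ℕ) (p : ℕ → K[X])
    (M H ρ : RatFunc K →ₗ[K] RatFunc K) (hM : ∀ f, M f = applyOp r p f)
    (hH1 : ∀ R : RatFunc K, R - H R ∈ LinearMap.range M)
    (hH2 : ∀ R : RatFunc K, H (H R) = H R)
    (Exc : Submodule K (RatFunc K))
    (hExc : Exc = Submodule.map H (LinearMap.range M))
    (hExcFin : FiniteDimensional K Exc)
    (hρ1 : ∀ R : RatFunc K, ρ (ρ R) = ρ R)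
    (hρ2 : LinearMap.ker ρ = Exc)
    (hρ3 : ∀ R S : RatFunc K, R - S ∈ Exc → (ρ R).num.degree ≤ S.num.degree) :
    (∀ R : RatFunc K, ρ (H (M R)) = 0) ∧
    (∀ R : RatFunc K, R - ρ (H R) ∈ LinearMap.range M) ∧
    (∀ R : RatFunc K, ρ (H R) = 0 ↔ R ∈ LinearMap.range M) ∧
    (∀ R : RatFunc K, ρ (H (ρ (H R))) = ρ (H R)) :=
  generalized_hermite_is_canonical_form_general M H ρ hH1 Exc hExc hρ1 hρ2
end

section
/- Let K be a field of characteristic zero, L, M ∈ K[x]⟨∂⟩ linear differential operators, and A, B ∈ K(x) nonzero rational functions such that M∘A = B∘L as operators on K(x) (where A, B act by multiplication). If [·]_L is a canonical form with respect to L, then the map R ↦ B·[R/B]_L is a canonical form with respect to M, i.e., it is K-linear, vanishes on M(K(x)), and satisfies R − B·[R/B]_L ∈ M(K(x)) for all R ∈ K(x). -/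
open Polynomial

section CanonicalForm

variable {K F : Type*} [CommSemiring K] [Field F] [Algebra K F]

def IsCanonicalForm (N : F → F) (c : F →ₗ[K] F) : Prop :=
  (∀ R, c (N R) = 0) ∧ ∀ R, R - c R ∈ Set.range N

noncomputable def conjByMul (B : F) (c : F →ₗ[K] F) : F →ₗ[K] F :=
  LinearMap.mulLeft K B ∘ₗ c ∘ₗ LinearMap.mulLeft K B⁻¹

theorem conjByMul_apply (B : F) (c : F →ₗ[K] F) (R : F) :
    conjByMul B c R = B * c (R / B) := by
  simp only [conjByMul, LinearMap.comp_apply, LinearMap.mulLeft_apply, div_eq_inv_mul]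

theorem IsCanonicalForm.conjByMul {L M : F → F} {A B : F} {c : F →ₗ[K] F}
    (hA : A ≠ 0) (hB : B ≠ 0) (hcomp : ∀ f, M (A * f) = B * L f)
    (hc : IsCanonicalForm L c) : IsCanonicalForm M (conjByMul B c) := by
  refine ⟨fun R => ?_, fun R => ?_⟩
  · have hMR : M R = B * L (R / A) := by rw [← hcomp, mul_div_cancel₀ R hA]
    rw [conjByMul_apply, hMR, mul_div_cancel_left₀ _ hB, hc.1, mul_zero]
  · obtain ⟨f, hf⟩ := hc.2 (R / B)
    refine ⟨A * f, ?_⟩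
    rw [conjByMul_apply, hcomp, hf, mul_sub, mul_div_cancel₀ R hB]

end CanonicalForm

theorem rational_factor_canonical_form_general {K : Type*} [Field K]
    (rL rM : ℕ) (qL pM : ℕ → K[X]) (A B : RatFunc K) (hA : A ≠ 0) (hB : B ≠ 0)
    (hcomp : ∀ f : RatFunc K, applyOp rM pM (A * f) = B * applyOp rL qL f)
    (cL : RatFunc K →ₗ[K] RatFunc K)
    (hcL1 : ∀ R : RatFunc K, cL (applyOp rL qL R) = 0)
    (hcL2 : ∀ R : RatFunc K, R - cL R ∈ Set.range (applyOp rL qL)) :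
    (∀ (a : K) (R₁ R₂ : RatFunc K),
      B * cL ((a • R₁ + R₂) / B) = a • (B * cL (R₁ / B)) + B * cL (R₂ / B)) ∧
    (∀ R : RatFunc K, B * cL (applyOp rM pM R / B) = 0) ∧
    (∀ R : RatFunc K, R - B * cL (R / B) ∈ Set.range (applyOp rM pM)) := by
  have hM : IsCanonicalForm (applyOp rM pM) (conjByMul B cL) :=
    IsCanonicalForm.conjByMul hA hB hcomp ⟨hcL1, hcL2⟩
  simp only [← conjByMul_apply]
  exact ⟨fun a R₁ R₂ => by rw [map_add, map_smul], hM.1, hM.2⟩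

/-- rational factors: if `M∘A = B∘L` with `A, B ∈ K(x)` nonzero acting
by multiplication, and `[·]_L` is a canonical form w.r.t. `L`, then `R ↦ B·[R/B]_L`
is a canonical form w.r.t. `M`: it is `K`-linear, vanishes on `M(K(x))`, and
`R − B·[R/B]_L ∈ M(K(x))` for all `R`. -/
theorem rational_factor_canonical_form {K : Type*} [Field K] [CharZero K]
    (rL rM : ℕ) (qL pM : ℕ → K[X]) (A B : RatFunc K) (hA : A ≠ 0) (hB : B ≠ 0)
    (hcomp : ∀ f : RatFunc K, applyOp rM pM (A * f) = B * applyOp rL qL f)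
    (cL : RatFunc K →ₗ[K] RatFunc K)
    (hcL1 : ∀ R : RatFunc K, cL (applyOp rL qL R) = 0)
    (hcL2 : ∀ R : RatFunc K, R - cL R ∈ Set.range (applyOp rL qL)) :
    (∀ (a : K) (R₁ R₂ : RatFunc K),
      B * cL ((a • R₁ + R₂) / B) = a • (B * cL (R₁ / B)) + B * cL (R₂ / B)) ∧
    (∀ R : RatFunc K, B * cL (applyOp rM pM R / B) = 0) ∧
    (∀ R : RatFunc K, R - B * cL (R / B) ∈ Set.range (applyOp rM pM)) :=
  rational_factor_canonical_form_general rL rM qL pM A B hA hB hcomp cL hcL1 hcL2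
end
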